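/- arXiv:2303.12480 — 5 statements merged into one kernel-verified Lean document; each statement's English description precedes it below -/
import Mathlib

section
/- For every integer N ≥ 1, δ > 0, θ = Nδ, and every 0 ≤ n < N⁴: E[(dX¹_{n+1})² | F_{nN}] = (N−1)δ + 2δ·1{ε_{nN} = −1} almost everywhere; in particular E[(dX¹_{n+1})² | F_{nN}] = θ(1 + c) almost everywhere for a measurable function c with |c| ≤ 1/N. The analogous identity holds for dX² with the indicator 1{ε_{nN} = +1}. -/
/-!
With `m = nN`, `dX = √(2δ) Σ_{l<N} 1{ε_{m+l} = e} ε_{m+l+1}` (`e = -1` for `dX¹`, `e = 1` for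
`dX²`). A function of `ε_0, …, ε_{b-1}` is constant on the dyadic intervals of length `2^{-b}`, and
`ε_b` takes the values `∓1` on their two halves, so `∫_s f ε_b dP = 0` for every `s ∈ F_m` with
`m < b`. Expanding the square, the cross terms vanish for this reason and the squares are the
indicators `1{ε_{m+l} = e}`, whose conditional expectation given `F_m` is `1/2` for `l ≥ 1` and the
indicator itself for `l = 0`. Hence `E[dX² | F_m] = 2δ((N - 1)/2 + 1{ε_m = e})`.
-/

open MeasureTheory Filter
open scoped ENNReal MeasureTheory

noncomputable section

/-- Lebesgue measure restricted to `Ω = [0,1)`. -/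
def P : Measure ℝ := volume.restrict (Set.Ico 0 1)

/-- Rademacher variable `ε_k` : `+1` on the right half of the dyadic interval of
generation `k` containing `x`, `-1` otherwise. -/
def rad (k : ℕ) (x : ℝ) : ℝ := if Odd ⌊(2 : ℝ) ^ (k + 1) * x⌋ then 1 else -1

/-- Increment `dB¹_l = 1{ε_{l-1} = -1} ε_l √(2δ)`. -/
def dB1 (δ : ℝ) (l : ℕ) (x : ℝ) : ℝ :=
  (if rad (l - 1) x = -1 then 1 else 0) * rad l x * Real.sqrt (2 * δ)

/-- Increment `dB²_l = 1{ε_{l-1} = +1} ε_l √(2δ)`. -/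
def dB2 (δ : ℝ) (l : ℕ) (x : ℝ) : ℝ :=
  (if rad (l - 1) x = 1 then 1 else 0) * rad l x * Real.sqrt (2 * δ)

/-- First coordinate of the discrete random walk. -/
def B1 (δ : ℝ) (k : ℕ) (x : ℝ) : ℝ := ∑ l ∈ Finset.Icc 1 k, dB1 δ l x

/-- Second coordinate of the discrete random walk. -/
def B2 (δ : ℝ) (k : ℕ) (x : ℝ) : ℝ := ∑ l ∈ Finset.Icc 1 k, dB2 δ l x

/-- The planar random walk `B_k = (B¹_k, B²_k)`. -/
def Bpt (δ : ℝ) (k : ℕ) (x : ℝ) : ℝ × ℝ := (B1 δ k x, B2 δ k x)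

/-- Euclidean norm of the planar walk at step `k`. -/
def Bnorm (δ : ℝ) (k : ℕ) (x : ℝ) : ℝ := Real.sqrt (B1 δ k x ^ 2 + B2 δ k x ^ 2)

/-- Coarse increment `dX¹_{n+1} = Σ_{l=1}^N dB¹_{nN+l}`. -/
def dX1 (δ : ℝ) (N n : ℕ) (x : ℝ) : ℝ := ∑ l ∈ Finset.Icc 1 N, dB1 δ (n * N + l) x

/-- Coarse increment `dX²_{n+1} = Σ_{l=1}^N dB²_{nN+l}`. -/
def dX2 (δ : ℝ) (N n : ℕ) (x : ℝ) : ℝ := ∑ l ∈ Finset.Icc 1 N, dB2 δ (n * N + l) x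

/-- The σ-algebra `F_k` generated by `ε_0, …, ε_k`. -/
def Ffil (k : ℕ) : MeasurableSpace ℝ :=
  ⨆ i ∈ Finset.Iic k, MeasurableSpace.comap (rad i) (inferInstance : MeasurableSpace ℝ)

/-- The stopping index `n_ε(x)` : the minimum of `N⁴` and the first `n ∈ [1, N⁴]`
with `|X_n(x)| > 1 - ε`, where `X_n = B_{nN}`. -/
def nstop (δ ε : ℝ) (N : ℕ) (x : ℝ) : ℕ :=
  sInf (insert (N ^ 4) {n | 1 ≤ n ∧ n ≤ N ^ 4 ∧ 1 - ε < Bnorm δ (n * N) x})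


open Finset

lemma rad_eq_one_or (k : ℕ) (x : ℝ) : rad k x = 1 ∨ rad k x = -1 := by
  unfold rad; split <;> simp

lemma rad_sq (k : ℕ) (x : ℝ) : rad k x ^ 2 = 1 := by
  rcases rad_eq_one_or k x with h | h <;> simp [h]

lemma floor_two_pow_mul_eq_div {a b : ℕ} (hab : a ≤ b) (x : ℝ) :
    ⌊(2 : ℝ) ^ a * x⌋ = ⌊(2 : ℝ) ^ b * x⌋ / (2 ^ (b - a) : ℕ) := by
  rw [← Int.floor_div_natCast]
  congr 1
  rw [Nat.cast_pow, Nat.cast_ofNat, mul_div_right_comm, div_eq_mul_inv,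
    ← pow_sub₀ _ two_ne_zero (Nat.sub_le b a), Nat.sub_sub_self hab]

/-- The σ-algebra generated by the dyadic intervals of length `2^{-b}`. -/
def dyadicSigma (b : ℕ) : MeasurableSpace ℝ :=
  MeasurableSpace.comap (fun x : ℝ => ⌊(2 : ℝ) ^ b * x⌋) inferInstance

lemma dyadicSigma_le (b : ℕ) : dyadicSigma b ≤ (inferInstance : MeasurableSpace ℝ) :=
  (measurable_const.mul measurable_id).floor.comap_le

lemma dyadicSigma_mono {a b : ℕ} (hab : a ≤ b) : dyadicSigma a ≤ dyadicSigma b := by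
  have h : (fun x : ℝ => ⌊(2 : ℝ) ^ a * x⌋) =
      (fun j : ℤ => j / (2 ^ (b - a) : ℕ)) ∘ fun x : ℝ => ⌊(2 : ℝ) ^ b * x⌋ :=
    funext (floor_two_pow_mul_eq_div hab)
  refine Measurable.comap_le ?_
  rw [h]
  exact (measurable_of_countable _).comp (comap_measurable _)

lemma measurable_dyadicSigma_rad {a b : ℕ} (hab : a < b) : Measurable[dyadicSigma b] (rad a) :=
  ((measurable_of_countable (fun j : ℤ => if Odd j then (1 : ℝ) else -1)).comp
    (comap_measurable _)).mono (dyadicSigma_mono hab) le_rfl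

lemma Ffil_le_dyadicSigma {m b : ℕ} (hmb : m < b) : Ffil m ≤ dyadicSigma b :=
  iSup₂_le fun _ hi => (measurable_dyadicSigma_rad ((mem_Iic.mp hi).trans_lt hmb)).comap_le

lemma Ffil_le (m : ℕ) : Ffil m ≤ (inferInstance : MeasurableSpace ℝ) :=
  (Ffil_le_dyadicSigma m.lt_succ_self).trans (dyadicSigma_le _)

lemma Ico_zero_one_eq_biUnion_preimage_floor {K : ℕ} (hK : 0 < K) :
    Set.Ico (0 : ℝ) 1 = ⋃ j ∈ range K, (fun x : ℝ => ⌊(K : ℝ) * x⌋) ⁻¹' {(j : ℤ)} := by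
  have hK' : (0 : ℝ) < K := Nat.cast_pos.mpr hK
  ext x
  simp only [Set.mem_Ico, Set.mem_iUnion, Set.mem_preimage, Set.mem_singleton_iff, mem_range,
    exists_prop]
  constructor
  · rintro ⟨hx0, hx1⟩
    have h0 : 0 ≤ ⌊(K : ℝ) * x⌋ := Int.floor_nonneg.mpr (by positivity)
    have h1 : ⌊(K : ℝ) * x⌋ < K := Int.floor_lt.mpr (by push_cast; nlinarith)
    exact ⟨⌊(K : ℝ) * x⌋.toNat, by omega, by omega⟩
  · rintro ⟨j, hj, hx⟩
    rw [Int.floor_eq_iff] at hx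
    push_cast at hx
    have hj' : (j : ℝ) + 1 ≤ K := by exact_mod_cast hj
    constructor <;> nlinarith

lemma volume_preimage_floor_mul {K : ℕ} (hK : 0 < K) (j : ℤ) :
    volume ((fun x : ℝ => ⌊(K : ℝ) * x⌋) ⁻¹' {j}) = ENNReal.ofReal (K : ℝ)⁻¹ := by
  change volume (((K : ℝ) * ·) ⁻¹' (Int.floor ⁻¹' {j})) = _
  rw [Real.volume_preimage_mul_left (by positivity), Int.preimage_floor_singleton,
    Real.volume_Ico, add_sub_cancel_left, ENNReal.ofReal_one, mul_one, abs_of_pos (by positivity)]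

lemma integrableOn_Ico_comp_floor (G : ℤ → ℝ) {K : ℕ} (hK : 0 < K) :
    IntegrableOn (fun x => G ⌊(K : ℝ) * x⌋) (Set.Ico 0 1) := by
  rw [Ico_zero_one_eq_biUnion_preimage_floor hK, integrableOn_finset_iUnion]
  intro j _
  refine (integrableOn_const (C := G j) ?_).congr_fun (fun x hx => (congrArg G hx).symm)
    ((measurable_const.mul measurable_id).floor (measurableSet_singleton _))
  rw [volume_preimage_floor_mul hK]
  exact ENNReal.ofReal_ne_top

lemma integral_Ico_comp_floor (G : ℤ → ℝ) {K : ℕ} (hK : 0 < K) :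
    ∫ x in Set.Ico (0 : ℝ) 1, G ⌊(K : ℝ) * x⌋ = (∑ j ∈ range K, G j) / K := by
  have hmeas (j : ℕ) : MeasurableSet ((fun x : ℝ => ⌊(K : ℝ) * x⌋) ⁻¹' {(j : ℤ)}) :=
    (measurable_const.mul measurable_id).floor (measurableSet_singleton _)
  have hint := integrableOn_Ico_comp_floor G hK
  rw [Ico_zero_one_eq_biUnion_preimage_floor hK, integrableOn_finset_iUnion] at hint
  rw [Ico_zero_one_eq_biUnion_preimage_floor hK, integral_biUnion_finset _ (fun j _ => hmeas j)
    (fun i _ j _ hij => (Set.disjoint_singleton.mpr (by exact_mod_cast hij)).preimage _) hint,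
    sum_div]
  refine sum_congr rfl fun j _ => ?_
  rw [setIntegral_congr_fun (hmeas j) (fun x hx => congrArg G hx), setIntegral_const,
    measureReal_def, volume_preimage_floor_mul hK, ENNReal.toReal_ofReal (by positivity),
    smul_eq_mul, div_eq_inv_mul]

lemma sum_range_two_mul_eq_zero (f : ℕ → ℝ) (hf : ∀ i, f (2 * i + 1) = -f (2 * i)) (M : ℕ) :
    ∑ j ∈ range (2 * M), f j = 0 := by
  induction M with
  | zero => simp
  | succ M ih => rw [mul_add_one, sum_range_succ, sum_range_succ, ih, hf]; ring

lemma integrable_of_measurable_dyadicSigma {b : ℕ} {f : ℝ → ℝ}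
    (hf : Measurable[dyadicSigma b] f) : Integrable f P := by
  obtain ⟨g, -, rfl⟩ := hf.exists_eq_measurable_comp
  have h := integrableOn_Ico_comp_floor g (pow_pos two_pos b)
  push_cast at h
  exact h

lemma integral_Ico_mul_rad_eq_zero {b : ℕ} {f : ℝ → ℝ} (hf : Measurable[dyadicSigma b] f) :
    ∫ x in Set.Ico (0 : ℝ) 1, f x * rad b x = 0 := by
  obtain ⟨g, -, rfl⟩ := hf.exists_eq_measurable_comp
  set G : ℤ → ℝ := fun j => g (j / 2) * if Odd j then 1 else -1
  have hG (x : ℝ) : g ⌊(2 : ℝ) ^ b * x⌋ * rad b x = G ⌊((2 ^ (b + 1) : ℕ) : ℝ) * x⌋ := by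
    rw [floor_two_pow_mul_eq_div (b.le_add_right 1), Nat.add_sub_cancel_left, pow_one]
    simp [G, rad]
  simp only [Function.comp_apply, hG]
  rw [integral_Ico_comp_floor G (pow_pos two_pos _), pow_succ', sum_range_two_mul_eq_zero,
    zero_div]
  intro i
  have h1 : ((2 * i + 1 : ℕ) : ℤ) / 2 = i := by omega
  have h2 : ((2 * i : ℕ) : ℤ) / 2 = i := by omega
  have o1 : Odd ((2 * i + 1 : ℕ) : ℤ) := ⟨i, by push_cast; ring⟩
  have o2 : ¬Odd ((2 * i : ℕ) : ℤ) := Int.not_odd_iff_even.mpr ⟨i, by push_cast; ring⟩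
  simp only [G, h1, h2, if_pos o1, if_neg o2]
  ring

instance : IsProbabilityMeasure P := ⟨by simp [P]⟩

lemma setIntegral_mul_rad_eq_zero {m b : ℕ} (hmb : m < b) {s : Set ℝ}
    (hs : MeasurableSet[Ffil m] s) {f : ℝ → ℝ} (hf : Measurable[dyadicSigma b] f) :
    ∫ x in s, f x * rad b x ∂P = 0 := by
  have hs' : MeasurableSet s := Ffil_le m s hs
  rw [P, Measure.restrict_restrict hs', Set.inter_comm, ← setIntegral_indicator hs']
  simp only [Set.indicator_mul_left]
  exact integral_Ico_mul_rad_eq_zero (hf.indicator (Ffil_le_dyadicSigma hmb s hs))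

def radInd (e : ℝ) (a : ℕ) (x : ℝ) : ℝ := if rad a x = e then 1 else 0

lemma radInd_eq_zero_or_one (e : ℝ) (a : ℕ) (x : ℝ) : radInd e a x = 0 ∨ radInd e a x = 1 := by
  unfold radInd; split <;> simp

lemma radInd_sq (e : ℝ) (a : ℕ) (x : ℝ) : radInd e a x ^ 2 = radInd e a x := by
  rcases radInd_eq_zero_or_one e a x with h | h <;> simp [h]

lemma radInd_eq_half_add {e : ℝ} (he : e = 1 ∨ e = -1) (a : ℕ) (x : ℝ) :
    radInd e a x = 1 / 2 + e / 2 * rad a x := by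
  unfold radInd
  rcases rad_eq_one_or a x with h | h <;> rcases he with rfl | rfl <;> norm_num [h]

lemma measurable_dyadicSigma_radInd (e : ℝ) {a b : ℕ} (hab : a < b) :
    Measurable[dyadicSigma b] (radInd e a) :=
  Measurable.ite (measurable_dyadicSigma_rad hab (measurableSet_singleton e)) measurable_const
    measurable_const

lemma measurable_Ffil_radInd (e : ℝ) (m : ℕ) : Measurable[Ffil m] (radInd e m) := by
  have hrad : Measurable[Ffil m] (rad m) := Measurable.of_comap_le <|
    le_iSup₂ (f := fun i (_ : i ∈ Iic m) => MeasurableSpace.comap (rad i) _) m (mem_Iic.mpr le_rfl)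
  exact Measurable.ite (hrad (measurableSet_singleton e)) measurable_const measurable_const

lemma setIntegral_radInd {m a : ℕ} (hma : m < a) {e : ℝ} (he : e = 1 ∨ e = -1) {s : Set ℝ}
    (hs : MeasurableSet[Ffil m] s) : ∫ x in s, radInd e a x ∂P = P.real s / 2 := by
  have hrad : ∫ x in s, rad a x ∂P = 0 := by
    simpa using setIntegral_mul_rad_eq_zero hma hs (f := fun _ => 1) measurable_const
  have hint : Integrable (rad a) P :=
    integrable_of_measurable_dyadicSigma (measurable_dyadicSigma_rad a.lt_succ_self)
  simp only [radInd_eq_half_add he]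
  rw [integral_add (integrable_const _).integrableOn (hint.const_mul _).integrableOn,
    integral_const_mul, hrad, setIntegral_const, smul_eq_mul]
  ring

def walkIncrement (e : ℝ) (m N : ℕ) (x : ℝ) : ℝ :=
  ∑ l ∈ range N, radInd e (m + l) x * rad (m + l + 1) x

lemma measurable_dyadicSigma_walkIncrement (e : ℝ) {m N b : ℕ} (h : m + N < b) :
    Measurable[dyadicSigma b] (walkIncrement e m N) := by
  refine Finset.measurable_sum (range N) fun l hl => ?_
  have hl : l < N := mem_range.mp hl
  exact (measurable_dyadicSigma_radInd e (a := m + l) (by omega)).mul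
    (measurable_dyadicSigma_rad (a := m + l + 1) (by omega))

lemma walkIncrement_succ_sq (e : ℝ) (m N : ℕ) (x : ℝ) :
    walkIncrement e m (N + 1) x ^ 2 = walkIncrement e m N x ^ 2
      + 2 * walkIncrement e m N x * radInd e (m + N) x * rad (m + N + 1) x
      + radInd e (m + N) x := by
  rw [walkIncrement, sum_range_succ, ← walkIncrement]
  linear_combination radInd e (m + N) x ^ 2 * rad_sq (m + N + 1) x + radInd_sq e (m + N) x

lemma setIntegral_walkIncrement_sq {e : ℝ} (he : e = 1 ∨ e = -1) {m : ℕ} {s : Set ℝ}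
    (hs : MeasurableSet[Ffil m] s) {N : ℕ} (hN : 1 ≤ N) :
    ∫ x in s, walkIncrement e m N x ^ 2 ∂P =
      ∫ x in s, radInd e m x ∂P + (N - 1) / 2 * P.real s := by
  induction N, hN using Nat.le_induction with
  | base => simp [walkIncrement, mul_pow, radInd_sq, rad_sq]
  | succ N hN ih =>
    have hW := measurable_dyadicSigma_walkIncrement e (m := m) (N := N) (b := m + N + 1)
      (by omega)
    have hi := measurable_dyadicSigma_radInd e (a := m + N) (b := m + N + 1) (by omega)
    have hr := measurable_dyadicSigma_rad (a := m + N + 1) (b := m + N + 2) (by omega)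
    have hcross : ∫ x in s, 2 * walkIncrement e m N x * radInd e (m + N) x * rad (m + N + 1) x ∂P
        = 0 := setIntegral_mul_rad_eq_zero (by omega) hs ((measurable_const.mul hW).mul hi)
    have hmono := dyadicSigma_mono (show m + N + 1 ≤ m + N + 2 by omega)
    have hW' := hW.mono hmono le_rfl
    have hi' := hi.mono hmono le_rfl
    have hint {f : ℝ → ℝ} (hf : Measurable[dyadicSigma (m + N + 2)] f) : IntegrableOn f s P :=
      (integrable_of_measurable_dyadicSigma hf).integrableOn
    have hsq : IntegrableOn (fun x => walkIncrement e m N x ^ 2) s P := hint (hW'.pow_const 2)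
    have hcross_int : IntegrableOn
        (fun x => 2 * walkIncrement e m N x * radInd e (m + N) x * rad (m + N + 1) x) s P :=
      hint (((measurable_const.mul hW').mul hi').mul hr)
    have hsum : IntegrableOn (fun x => walkIncrement e m N x ^ 2
        + 2 * walkIncrement e m N x * radInd e (m + N) x * rad (m + N + 1) x) s P :=
      hsq.add hcross_int
    simp only [walkIncrement_succ_sq]
    rw [integral_add hsum (hint hi'), integral_add hsq hcross_int, ih, hcross,
      setIntegral_radInd (a := m + N) (by omega) he hs]
    push_cast
    ring

lemma condExp_sq_mul_walkIncrement {δ : ℝ} (hδ : 0 ≤ δ) {e : ℝ} (he : e = 1 ∨ e = -1) (m : ℕ)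
    {N : ℕ} (hN : 1 ≤ N) :
    P[fun x => (√(2 * δ) * walkIncrement e m N x) ^ 2 | Ffil m] =ᵐ[P]
      fun x => ((N : ℝ) - 1) * δ + 2 * δ * radInd e m x := by
  have hF : Integrable (fun x => (√(2 * δ) * walkIncrement e m N x) ^ 2) P :=
    integrable_of_measurable_dyadicSigma
      ((measurable_const.mul (measurable_dyadicSigma_walkIncrement e (b := m + N + 1)
        (by omega))).pow_const 2)
  have hind : Integrable (radInd e m) P :=
    integrable_of_measurable_dyadicSigma (measurable_dyadicSigma_radInd e m.lt_succ_self)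
  have hg : Integrable (fun x => ((N : ℝ) - 1) * δ + 2 * δ * radInd e m x) P :=
    (integrable_const _).add (hind.const_mul _)
  refine (ae_eq_condExp_of_forall_setIntegral_eq (Ffil_le m) hF (fun s _ _ => hg.integrableOn)
    (fun s hs _ => ?_) (measurable_const.add
      (measurable_const.mul (measurable_Ffil_radInd e m))).aestronglyMeasurable).symm
  simp only [mul_pow, Real.sq_sqrt (by linarith : 0 ≤ 2 * δ)]
  rw [integral_const_mul, setIntegral_walkIncrement_sq he hs hN,
    integral_add (integrable_const _).integrableOn (hind.const_mul _).integrableOn,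
    setIntegral_const, integral_const_mul, smul_eq_mul]
  ring

lemma dX1_eq (δ : ℝ) (N n : ℕ) (x : ℝ) :
    dX1 δ N n x = √(2 * δ) * walkIncrement (-1) (n * N) N x := by
  rw [dX1, walkIncrement, mul_sum, ← Finset.Ico_add_one_right_eq_Icc, sum_Ico_eq_sum_range,
    Nat.add_sub_cancel]
  refine sum_congr rfl fun l _ => ?_
  rw [dB1, radInd, show n * N + (1 + l) - 1 = n * N + l by omega,
    show n * N + (1 + l) = n * N + l + 1 by omega]
  exact mul_comm _ _

lemma dX2_eq (δ : ℝ) (N n : ℕ) (x : ℝ) :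
    dX2 δ N n x = √(2 * δ) * walkIncrement 1 (n * N) N x := by
  rw [dX2, walkIncrement, mul_sum, ← Finset.Ico_add_one_right_eq_Icc, sum_Ico_eq_sum_range,
    Nat.add_sub_cancel]
  refine sum_congr rfl fun l _ => ?_
  rw [dB2, radInd, show n * N + (1 + l) - 1 = n * N + l by omega,
    show n * N + (1 + l) = n * N + l + 1 by omega]
  exact mul_comm _ _

lemma exists_affine_radInd_eq_mul_one_add (δ : ℝ) {N : ℕ} (hN : 1 ≤ N) (e : ℝ) (m : ℕ) :
    ∃ c : ℝ → ℝ, Measurable c ∧ (∀ x, |c x| ≤ 1 / N) ∧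
      ∀ x, ((N : ℝ) - 1) * δ + 2 * δ * radInd e m x = N * δ * (1 + c x) := by
  have hN' : (N : ℝ) ≠ 0 := by positivity
  refine ⟨fun x => (2 * radInd e m x - 1) / N, ?_, fun x => ?_, fun x => ?_⟩
  · exact ((measurable_const.mul ((measurable_dyadicSigma_radInd e m.lt_succ_self).mono
      (dyadicSigma_le _) le_rfl)).sub measurable_const).div_const _
  · rcases radInd_eq_zero_or_one e m x with h | h <;> norm_num [h, abs_div]
  · field_simp
    ring

theorem statement7_general (δ : ℝ) (hδ : 0 < δ) (N : ℕ) (hN : 1 ≤ N) (θ : ℝ) (hθ : θ = N * δ)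
    (n : ℕ) :
    (P[fun x => dX1 δ N n x ^ 2|Ffil (n * N)] =ᵐ[P]
      fun x => ((N : ℝ) - 1) * δ + 2 * δ * (if rad (n * N) x = -1 then 1 else 0)) ∧
    (∃ c : ℝ → ℝ, Measurable c ∧ (∀ x, |c x| ≤ 1 / N) ∧
      P[fun x => dX1 δ N n x ^ 2|Ffil (n * N)] =ᵐ[P] fun x => θ * (1 + c x)) ∧
    (P[fun x => dX2 δ N n x ^ 2|Ffil (n * N)] =ᵐ[P]
      fun x => ((N : ℝ) - 1) * δ + 2 * δ * (if rad (n * N) x = 1 then 1 else 0)) ∧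
    (∃ c : ℝ → ℝ, Measurable c ∧ (∀ x, |c x| ≤ 1 / N) ∧
      P[fun x => dX2 δ N n x ^ 2|Ffil (n * N)] =ᵐ[P] fun x => θ * (1 + c x)) := by
  subst hθ
  have h1 := condExp_sq_mul_walkIncrement hδ.le (Or.inr rfl) (n * N) hN
  have h2 := condExp_sq_mul_walkIncrement hδ.le (Or.inl rfl) (n * N) hN
  obtain ⟨c1, hc1, hc1_le, hc1_eq⟩ := exists_affine_radInd_eq_mul_one_add δ hN (-1) (n * N)
  obtain ⟨c2, hc2, hc2_le, hc2_eq⟩ := exists_affine_radInd_eq_mul_one_add δ hN 1 (n * N)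
  simp only [dX1_eq, dX2_eq]
  exact ⟨h1, ⟨c1, hc1, hc1_le, h1.trans (.of_forall hc1_eq)⟩,
    h2, ⟨c2, hc2, hc2_le, h2.trans (.of_forall hc2_eq)⟩⟩

/-- conditional second moments of the coarse increments. -/
theorem statement7 (δ : ℝ) (hδ : 0 < δ) (N : ℕ) (hN : 1 ≤ N) (θ : ℝ) (hθ : θ = N * δ)
    (n : ℕ) (hn : n < N ^ 4) :
    (P[fun x => dX1 δ N n x ^ 2|Ffil (n * N)] =ᵐ[P]
      fun x => ((N : ℝ) - 1) * δ + 2 * δ * (if rad (n * N) x = -1 then 1 else 0)) ∧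
    (∃ c : ℝ → ℝ, Measurable c ∧ (∀ x, |c x| ≤ 1 / N) ∧
      P[fun x => dX1 δ N n x ^ 2|Ffil (n * N)] =ᵐ[P] fun x => θ * (1 + c x)) ∧
    (P[fun x => dX2 δ N n x ^ 2|Ffil (n * N)] =ᵐ[P]
      fun x => ((N : ℝ) - 1) * δ + 2 * δ * (if rad (n * N) x = 1 then 1 else 0)) ∧
    (∃ c : ℝ → ℝ, Measurable c ∧ (∀ x, |c x| ≤ 1 / N) ∧
      P[fun x => dX2 δ N n x ^ 2|Ffil (n * N)] =ᵐ[P] fun x => θ * (1 + c x)) :=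
  statement7_general δ hδ N hN θ hθ n

end
end

section
/- For every integer q ≥ 1 there exists a constant C_q > 0, depending only on q, such that for all δ > 0, all integers N ≥ 1, all 0 ≤ n < N⁴, and i ∈ {1,2}: E[|dX^i_{n+1}|^{2q} | F_{nN}] ≤ C_q θ^q almost everywhere, where θ = Nδ. -/
open MeasureTheory Filter
open scoped ENNReal MeasureTheory

noncomputable section

/-!
Conditioning on `F_{nN}` fixes the dyadic cell of generation `nN + 1` containing `x`, and the
`F_{nN}`-measurable sets are unions of such cells. On a cell, `dX^i_{n+1} / √(2δ)` is a
martingale transform `∑ w_l ε_l` of the next `N` signs with predictable weights `w_l ∈ {0, 1}`,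
so it suffices to bound the average of its `2q`-th power over the `2 ^ N` subcells. Splitting
each subcell once more into its two halves, the odd binomial terms of `(A ± c) ^ 2p` cancel;
this gives `M_{N+1}(p) ≤ ∑ᵢ C(2p, 2i) M_N(i)` for the averaged moments, whence
`M_N(p) ≤ 4 ^ p² (N + 1) ^ p` by induction on `p` and `N`.
-/

namespace DiscreteMoments

open Finset

theorem sum_range_mul_eq_sum_sum {M : Type*} [AddCommMonoid M] (f : ℕ → M) (a b : ℕ) :
    ∑ m ∈ range (a * b), f m = ∑ r ∈ range a, ∑ t ∈ range b, f (r * b + t) := by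
  induction a with
  | zero => simp
  | succ a ih => rw [Nat.succ_mul, sum_range_add, ih, sum_range_succ]

theorem sum_range_ite_even {M : Type*} [AddCommMonoid M] (p : ℕ) (F : ℕ → M) :
    ∑ k ∈ range (2 * p + 1), (if Even k then F k else 0) = ∑ i ∈ range (p + 1), F (2 * i) := by
  have hodd : ¬ Even (2 * p + 1) := by simp
  have hext : ∑ k ∈ range (2 * p + 1), (if Even k then F k else 0)
      = ∑ k ∈ range ((p + 1) * 2), (if Even k then F k else 0) := by
    rw [show (p + 1) * 2 = 2 * p + 1 + 1 by ring, sum_range_succ _ (2 * p + 1), if_neg hodd,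
      add_zero]
  rw [hext, sum_range_mul_eq_sum_sum]
  refine sum_congr rfl fun i _ => ?_
  simp [sum_range_succ, mul_comm i 2]

/-- Averaging over the sign of `c` kills the odd binomial terms. -/
theorem sub_pow_add_add_pow_le (A c : ℝ) (hc : |c| ≤ 1) (p : ℕ) :
    (A - c) ^ (2 * p) + (A + c) ^ (2 * p)
      ≤ 2 * ∑ i ∈ range (p + 1), ((2 * p).choose (2 * i) : ℝ) * A ^ (2 * i) := by
  rw [← sum_range_ite_even p (fun k => ((2 * p).choose k : ℝ) * A ^ k), mul_sum,
    sub_eq_add_neg, add_pow, add_pow, ← sum_add_distrib]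
  refine sum_le_sum fun k hk => ?_
  have hk : k ≤ 2 * p := Nat.lt_succ_iff.mp (mem_range.mp hk)
  have hcpow : c ^ (2 * p - k) ≤ 1 :=
    (le_abs_self _).trans (by rw [abs_pow]; exact pow_le_one₀ (abs_nonneg c) hc)
  split_ifs with hev
  · have hsub : Even (2 * p - k) := (Nat.even_sub hk).mpr (by simp [hev])
    rw [hsub.neg_pow]
    have := mul_le_mul_of_nonneg_left hcpow (hev.pow_nonneg A)
    nlinarith [Nat.cast_nonneg (α := ℝ) ((2 * p).choose k)]
  · have hsub : Odd (2 * p - k) := by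
      rw [← Nat.not_even_iff_odd, Nat.even_sub hk]; simp [hev]
    rw [hsub.neg_pow]; exact le_of_eq (by ring)

theorem sum_range_choose_two_mul_le (p : ℕ) :
    ∑ i ∈ range p, ((2 * p).choose (2 * i) : ℝ) ≤ 4 ^ p := by
  have hinj : Set.InjOn (fun i => 2 * i) (range p) := fun a _ b _ h => by simpa using h
  rw [← sum_image (f := fun k => ((2 * p).choose k : ℝ)) hinj]
  calc ∑ k ∈ (range p).image (2 * ·), ((2 * p).choose k : ℝ)
      ≤ ∑ k ∈ range (2 * p + 1), ((2 * p).choose k : ℝ) :=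
        sum_le_sum_of_subset_of_nonneg
          (fun k hk => by obtain ⟨i, hi, rfl⟩ := mem_image.mp hk; simp at hi ⊢; omega)
          (fun _ _ _ => by positivity)
    _ = 4 ^ p := by rw [← Nat.cast_sum, Nat.sum_range_choose, pow_mul]; norm_num

theorem sum_choose_mul_pow_le (p : ℕ) (hp : 1 ≤ p) {x : ℝ} (hx : 1 ≤ x) :
    ∑ i ∈ range (p + 1), ((2 * p).choose (2 * i) : ℝ) * (4 ^ (i ^ 2) * x ^ i)
      ≤ 4 ^ (p ^ 2) * (x + 1) ^ p := by
  obtain ⟨m, rfl⟩ : ∃ m, p = m + 1 := ⟨p - 1, by omega⟩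
  have hlow : ∀ i ∈ range (m + 1), ((2 * (m + 1)).choose (2 * i) : ℝ) * (4 ^ (i ^ 2) * x ^ i)
      ≤ ((2 * (m + 1)).choose (2 * i) : ℝ) * (4 ^ (m ^ 2) * x ^ m) := by
    intro i hi
    have hi : i ≤ m := Nat.lt_succ_iff.mp (mem_range.mp hi)
    gcongr
    norm_num
  have hexp : (4 : ℝ) ^ (m + 1) * 4 ^ (m ^ 2) ≤ 4 ^ ((m + 1) ^ 2) := by
    rw [← pow_add]; exact pow_le_pow_right₀ (by norm_num) (by nlinarith)
  rw [sum_range_succ, Nat.choose_self, Nat.cast_one, one_mul]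
  calc ∑ i ∈ range (m + 1), ((2 * (m + 1)).choose (2 * i) : ℝ) * (4 ^ (i ^ 2) * x ^ i)
        + 4 ^ ((m + 1) ^ 2) * x ^ (m + 1)
      ≤ 4 ^ (m + 1) * (4 ^ (m ^ 2) * x ^ m) + 4 ^ ((m + 1) ^ 2) * x ^ (m + 1) := by
        gcongr
        calc _ ≤ _ := sum_le_sum hlow
          _ = (∑ i ∈ range (m + 1), ((2 * (m + 1)).choose (2 * i) : ℝ)) * (4 ^ (m ^ 2) * x ^ m) :=
            (sum_mul ..).symm
          _ ≤ _ := mul_le_mul_of_nonneg_right (sum_range_choose_two_mul_le (m + 1)) (by positivity)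
    _ ≤ 4 ^ ((m + 1) ^ 2) * x ^ m + 4 ^ ((m + 1) ^ 2) * x ^ (m + 1) := by
        rw [← mul_assoc]; gcongr
    _ ≤ 4 ^ ((m + 1) ^ 2) * (x + 1) ^ (m + 1) := by
        calc _ = 4 ^ ((m + 1) ^ 2) * (x ^ m * (x + 1)) := by ring
          _ ≤ 4 ^ ((m + 1) ^ 2) * ((x + 1) ^ m * (x + 1)) := by gcongr; linarith
          _ = _ := by ring

/-- `X N m` is a dyadic martingale indexed by cells: passing from cell `m` of generation `N` to its
halves `2m`, `2m + 1` moves it by `∓ c N m`. -/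
theorem sum_pow_le_of_dyadic_increments {X c : ℕ → ℤ → ℝ} (hc : ∀ N m, |c N m| ≤ 1)
    (h0 : ∀ m, X 0 m = 0)
    (hstep : ∀ N m, X (N + 1) (2 * m) = X N m - c N m ∧ X (N + 1) (2 * m + 1) = X N m + c N m)
    (p N : ℕ) (r : ℤ) :
    ∑ t ∈ range (2 ^ N), X N (r * 2 ^ N + t) ^ (2 * p) ≤ 2 ^ N * (4 ^ (p ^ 2) * (N + 1) ^ p) := by
  induction p using Nat.strong_induction_on generalizing N r with | _ p ihp =>
  rcases Nat.eq_zero_or_pos p with rfl | hp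
  · simp
  induction N generalizing r with
  | zero => simp [h0, hp.ne']
  | succ N ihN =>
    set A : ℕ → ℝ := fun u => X N (r * 2 ^ N + u)
    have hsplit : ∑ t ∈ range (2 ^ (N + 1)), X (N + 1) (r * 2 ^ (N + 1) + t) ^ (2 * p)
        = ∑ u ∈ range (2 ^ N), ((A u - c N (r * 2 ^ N + u)) ^ (2 * p)
            + (A u + c N (r * 2 ^ N + u)) ^ (2 * p)) := by
      rw [show 2 ^ (N + 1) = 2 ^ N * 2 from pow_succ 2 N, sum_range_mul_eq_sum_sum]
      refine sum_congr rfl fun u _ => ?_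
      have e0 : r * 2 ^ (N + 1) + ((u * 2 + 0 : ℕ) : ℤ) = 2 * (r * 2 ^ N + u) := by
        push_cast; ring
      have e1 : r * 2 ^ (N + 1) + ((u * 2 + 1 : ℕ) : ℤ) = 2 * (r * 2 ^ N + u) + 1 := by
        push_cast; ring
      rw [sum_range_succ, sum_range_one, e0, e1, (hstep N _).1, (hstep N _).2]
    have hmom : ∀ i ∈ range (p + 1),
        ∑ u ∈ range (2 ^ N), A u ^ (2 * i) ≤ 2 ^ N * (4 ^ (i ^ 2) * (N + 1) ^ i) := by
      intro i hi
      rcases (Nat.lt_succ_iff_lt_or_eq.mp (mem_range.mp hi)) with hi | rfl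
      · exact ihp i hi N r
      · exact ihN r
    rw [hsplit]
    calc _ ≤ ∑ u ∈ range (2 ^ N),
            2 * ∑ i ∈ range (p + 1), ((2 * p).choose (2 * i) : ℝ) * A u ^ (2 * i) :=
          sum_le_sum fun u _ => sub_pow_add_add_pow_le _ _ (hc _ _) p
      _ = 2 * ∑ i ∈ range (p + 1),
            ((2 * p).choose (2 * i) : ℝ) * ∑ u ∈ range (2 ^ N), A u ^ (2 * i) := by
          rw [← mul_sum, sum_comm]; simp_rw [mul_sum]
      _ ≤ 2 * ∑ i ∈ range (p + 1),
            ((2 * p).choose (2 * i) : ℝ) * (2 ^ N * (4 ^ (i ^ 2) * (N + 1) ^ i)) := by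
          gcongr with i hi; exact hmom i hi
      _ = 2 ^ (N + 1) * ∑ i ∈ range (p + 1),
            ((2 * p).choose (2 * i) : ℝ) * (4 ^ (i ^ 2) * ((N : ℝ) + 1) ^ i) := by
          rw [mul_sum, mul_sum]
          exact sum_congr rfl fun i _ => by ring
      _ ≤ 2 ^ (N + 1) * (4 ^ (p ^ 2) * ((N + 1 : ℕ) + 1) ^ p) := by
          gcongr
          exact_mod_cast sum_choose_mul_pow_le p hp (x := (N : ℝ) + 1) (by linarith)

def digitSign (m : ℤ) (j : ℕ) : ℝ := if Odd (m / 2 ^ j) then 1 else -1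

/-- The block sum `∑ₗ 1{ε_{l-1} = v} ε_l` read off the binary digits of a dyadic cell index `m`:
the digit of weight `2 ^ j` is the sign `ε_l` with `l = N - j`, so the finest digit is the last
step (`sum_rad_eq_walk`). -/
def walk (v : ℝ) (N : ℕ) (m : ℤ) : ℝ :=
  ∑ j ∈ range N, (if digitSign m (j + 1) = v then 1 else 0) * digitSign m j

theorem digitSign_two_mul_add_succ (m b : ℤ) (hb : 0 ≤ b) (hb' : b < 2) (j : ℕ) :
    digitSign (2 * m + b) (j + 1) = digitSign m j := by
  rw [digitSign, digitSign, pow_succ', ← Int.ediv_ediv_of_nonneg (by norm_num),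
    show (2 * m + b) / 2 = m by omega]

theorem walk_succ (v : ℝ) (N : ℕ) (m : ℤ) :
    walk v (N + 1) (2 * m) = walk v N m - (if digitSign m 0 = v then 1 else 0) ∧
      walk v (N + 1) (2 * m + 1) = walk v N m + (if digitSign m 0 = v then 1 else 0) := by
  have h0 := digitSign_two_mul_add_succ m 0 le_rfl (by norm_num)
  have h1 := digitSign_two_mul_add_succ m 1 zero_le_one (by norm_num)
  rw [add_zero] at h0
  have hlow0 : digitSign (2 * m) 0 = -1 := by simp [digitSign]
  have hlow1 : digitSign (2 * m + 1) 0 = 1 := by simp [digitSign]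
  simp only [walk, sum_range_succ', h0, h1, hlow0, hlow1]
  constructor <;> ring

theorem sum_walk_pow_le (v : ℝ) (p N : ℕ) (r : ℤ) :
    ∑ t ∈ range (2 ^ N), walk v N (r * 2 ^ N + t) ^ (2 * p)
      ≤ 2 ^ N * (4 ^ (p ^ 2) * (N + 1) ^ p) :=
  sum_pow_le_of_dyadic_increments (c := fun _ m => if digitSign m 0 = v then 1 else 0)
    (fun _ _ => by split_ifs <;> norm_num) (fun _ => by simp [walk]) (walk_succ v) p N r

theorem floor_two_pow_mul_eq_ediv (x : ℝ) {a j K : ℕ} (h : a + j = K) :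
    ⌊(2 : ℝ) ^ a * x⌋ = ⌊(2 : ℝ) ^ K * x⌋ / 2 ^ j := by
  have := Int.floor_div_natCast ((2 : ℝ) ^ K * x) (2 ^ j)
  push_cast at this
  rw [← this, ← h, pow_add]
  congr 1
  field_simp

theorem rad_eq_digitSign {i j K : ℕ} (h : i + 1 + j = K) (x : ℝ) :
    rad i x = digitSign ⌊(2 : ℝ) ^ K * x⌋ j := by
  rw [rad, digitSign, floor_two_pow_mul_eq_ediv x h]

theorem sum_rad_eq_walk (v δ : ℝ) (k N : ℕ) (x : ℝ) :
    ∑ l ∈ Icc 1 N, (if rad (k + l - 1) x = v then 1 else 0) * rad (k + l) x * Real.sqrt (2 * δ)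
      = Real.sqrt (2 * δ) * walk v N ⌊(2 : ℝ) ^ (k + 1 + N) * x⌋ := by
  rw [walk, mul_sum]
  refine sum_nbij' (fun l => N - l) (fun j => N - j) ?_ ?_ ?_ ?_ ?_
  all_goals intro l hl; simp only [mem_Icc, mem_range] at hl ⊢
  all_goals try omega
  rw [rad_eq_digitSign (i := k + l) (j := N - l) (K := k + 1 + N) (by omega),
    rad_eq_digitSign (i := k + l - 1) (j := N - l + 1) (K := k + 1 + N) (by omega)]
  ring

theorem ae_condExp_le_of_forall_setIntegral_le {α : Type*} {m m₀ : MeasurableSpace α}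
    {μ : Measure α} [IsFiniteMeasure μ] (hm : m ≤ m₀) {f : α → ℝ} (hf : Integrable f μ) {C : ℝ}
    (h : ∀ s, MeasurableSet[m] s → ∫ x in s, f x ∂μ ≤ C * μ.real s) :
    ∀ᵐ x ∂μ, μ[f|m] x ≤ C := by
  refine ae_le_of_ae_le_trim (hm := hm) (ae_le_of_forall_setIntegral_le
    (integrable_condExp.trim hm stronglyMeasurable_condExp) (integrable_const C) fun s hs _ => ?_)
  rw [← setIntegral_trim hm stronglyMeasurable_condExp hs, setIntegral_condExp hm hf hs,
    setIntegral_const, smul_eq_mul, measureReal_def, trim_measurableSet_eq hm hs,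
    ← measureReal_def, mul_comm]
  exact h s hs

theorem floor_mul_eq_of_mem_Ico {a x : ℝ} (ha : 0 < a) {n : ℕ}
    (hx : x ∈ Set.Ico (n / a) ((n + 1) / a)) :
    ⌊a * x⌋ = n := by
  rw [Int.floor_eq_iff]
  obtain ⟨h1, h2⟩ := hx
  rw [div_le_iff₀ ha] at h1
  rw [lt_div_iff₀ ha] at h2
  push_cast
  constructor <;> linarith

theorem Ico_zero_div_succ {a : ℝ} (ha : 0 < a) (n : ℕ) :
    Set.Ico 0 ((n + 1 : ℕ) / a) = Set.Ico 0 (n / a) ∪ Set.Ico (n / a) ((n + 1) / a) := by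
  push_cast
  exact (Set.Ico_union_Ico_eq_Ico (by positivity) (by gcongr; linarith)).symm

theorem integrableOn_Ico_comp_floor (g : ℤ → ℝ) {a : ℝ} (ha : 0 < a) (n : ℕ) :
    IntegrableOn (fun x => g ⌊a * x⌋) (Set.Ico 0 (n / a)) := by
  induction n with
  | zero => simp
  | succ n ih =>
    rw [Ico_zero_div_succ ha]
    exact ih.union ((integrableOn_const (by simp)).congr_fun
      (fun x hx => (congrArg g (floor_mul_eq_of_mem_Ico ha hx)).symm) measurableSet_Ico)

theorem integral_Ico_comp_floor (g : ℤ → ℝ) {a : ℝ} (ha : 0 < a) (n : ℕ) :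
    ∫ x in Set.Ico 0 (n / a), g ⌊a * x⌋ = (∑ m ∈ range n, g m) / a := by
  induction n with
  | zero => simp
  | succ n ih =>
    have hcell : ∫ x in Set.Ico (n / a) ((n + 1) / a), g ⌊a * x⌋ = g n / a := by
      rw [setIntegral_congr_fun measurableSet_Ico
        (fun x hx => congrArg g (floor_mul_eq_of_mem_Ico ha hx)), setIntegral_const,
        Real.volume_real_Ico_of_le (by gcongr; linarith), smul_eq_mul]
      field_simp
      ring
    rw [Ico_zero_div_succ ha, setIntegral_union (Set.Ico_disjoint_Ico_same) measurableSet_Ico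
      (integrableOn_Ico_comp_floor g ha n) ((integrableOn_Ico_comp_floor g ha (n + 1)).mono_set
        (by rw [Ico_zero_div_succ ha]; exact Set.subset_union_right)), ih, hcell,
      sum_range_succ, add_div]

theorem integrable_comp_floor (g : ℤ → ℝ) (K : ℕ) :
    Integrable (fun x => g ⌊(2 : ℝ) ^ K * x⌋) P := by
  have h := integrableOn_Ico_comp_floor g (a := 2 ^ K) (by positivity) (2 ^ K)
  rwa [Nat.cast_pow, Nat.cast_ofNat, div_self (by positivity)] at h

theorem integral_comp_floor (g : ℤ → ℝ) (K : ℕ) :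
    ∫ x, g ⌊(2 : ℝ) ^ K * x⌋ ∂P = (∑ m ∈ range (2 ^ K), g m) / 2 ^ K := by
  have h := integral_Ico_comp_floor g (a := 2 ^ K) (by positivity) (2 ^ K)
  rwa [Nat.cast_pow, Nat.cast_ofNat, div_self (by positivity)] at h

theorem measurable_floor_two_pow_mul (K : ℕ) : Measurable fun x : ℝ => ⌊(2 : ℝ) ^ K * x⌋ :=
  Int.measurable_floor.comp (measurable_const_mul _)

theorem Ffil_le_comap_floor (k : ℕ) :
    Ffil k ≤ MeasurableSpace.comap (fun x : ℝ => ⌊(2 : ℝ) ^ (k + 1) * x⌋) inferInstance := by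
  refine iSup₂_le fun i hi => ?_
  have hrad : rad i = (fun m => digitSign m (k - i)) ∘ fun x : ℝ => ⌊(2 : ℝ) ^ (k + 1) * x⌋ :=
    funext (rad_eq_digitSign (by simp at hi; omega))
  rw [hrad, ← MeasurableSpace.comap_comp]
  exact MeasurableSpace.comap_mono (Measurable.of_discrete).comap_le

theorem Ffil_le (k : ℕ) : Ffil k ≤ (inferInstance : MeasurableSpace ℝ) :=
  (Ffil_le_comap_floor k).trans (measurable_floor_two_pow_mul _).comap_le

instance : IsProbabilityMeasure P where
  measure_univ := by simp [P]

theorem setIntegral_preimage_floor (K N : ℕ) (T : Set ℤ) (ψ : ℤ → ℝ) :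
    ∫ x in (fun x : ℝ => ⌊(2 : ℝ) ^ K * x⌋) ⁻¹' T, ψ ⌊(2 : ℝ) ^ (K + N) * x⌋ ∂P
      = (∑ r ∈ range (2 ^ K),
          T.indicator (fun r => ∑ t ∈ range (2 ^ N), ψ (r * 2 ^ N + t)) r) / 2 ^ (K + N) := by
  classical
  have hind : ((fun x : ℝ => ⌊(2 : ℝ) ^ K * x⌋) ⁻¹' T).indicator
      (fun x => ψ ⌊(2 : ℝ) ^ (K + N) * x⌋)
      = fun x => ((· / 2 ^ N) ⁻¹' T).indicator ψ ⌊(2 : ℝ) ^ (K + N) * x⌋ := by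
    funext x
    simp [Set.indicator_apply, ← floor_two_pow_mul_eq_ediv x rfl]
  rw [← integral_indicator (measurable_floor_two_pow_mul K (.of_discrete)), hind,
    integral_comp_floor, pow_add, sum_range_mul_eq_sum_sum]
  congr 1
  refine sum_congr rfl fun r _ => ?_
  have hdiv : ∀ t ∈ range (2 ^ N), ((r : ℤ) * 2 ^ N + t) / 2 ^ N = r := by
    intro t ht
    rw [add_comm, Int.add_mul_ediv_right _ _ (by positivity),
      Int.ediv_eq_zero_of_lt (by positivity) (by exact_mod_cast mem_range.mp ht), zero_add]
  by_cases hr : (r : ℤ) ∈ T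
  · simp only [Set.indicator_of_mem hr]
    exact sum_congr rfl fun t ht => by simp [hdiv t ht, hr]
  · simp only [Set.indicator_of_notMem hr]
    exact sum_eq_zero fun t ht => by simp [hdiv t ht, hr]

theorem ae_condExp_comp_floor_le (k N : ℕ) {φ : ℤ → ℝ} {C : ℝ}
    (hφ : ∀ r : ℤ, ∑ t ∈ range (2 ^ N), φ (r * 2 ^ N + t) ≤ 2 ^ N * C) :
    ∀ᵐ x ∂P, P[fun x => φ ⌊(2 : ℝ) ^ (k + 1 + N) * x⌋ | Ffil k] x ≤ C := by
  refine ae_condExp_le_of_forall_setIntegral_le (Ffil_le k) (integrable_comp_floor φ _)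
    fun s hs => ?_
  obtain ⟨T, -, rfl⟩ := Ffil_le_comap_floor k s hs
  have hC := setIntegral_preimage_floor (k + 1) N T fun _ => C
  rw [setIntegral_const, smul_eq_mul, mul_comm] at hC
  rw [hC, setIntegral_preimage_floor]
  gcongr ?_ / _
  refine sum_le_sum fun r _ => ?_
  by_cases hr : (r : ℤ) ∈ T
  · simpa [Set.indicator_of_mem hr] using hφ r
  · simp [Set.indicator_of_notMem hr]

theorem ae_condExp_abs_sum_rad_pow_le (v : ℝ) {δ : ℝ} (hδ : 0 ≤ δ) {N : ℕ} (hN : 1 ≤ N)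
    (k q : ℕ) :
    ∀ᵐ x ∂P, P[fun y => |∑ l ∈ Icc 1 N,
        (if rad (k + l - 1) y = v then 1 else 0) * rad (k + l) y * Real.sqrt (2 * δ)| ^ (2 * q)
      | Ffil k] x ≤ 4 ^ (q ^ 2) * 4 ^ q * ((N : ℝ) * δ) ^ q := by
  simp_rw [sum_rad_eq_walk]
  refine ae_condExp_comp_floor_le k N (φ := fun m => |Real.sqrt (2 * δ) * walk v N m| ^ (2 * q))
    fun r => ?_
  have habs : ∀ m,
      |Real.sqrt (2 * δ) * walk v N m| ^ (2 * q) = (2 * δ) ^ q * walk v N m ^ (2 * q) := fun m => by rw [pow_mul, sq_abs, mul_pow, Real.sq_sqrt (by positivity), mul_pow, ← pow_mul]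
  have hθ : (2 * δ) ^ q * ((N : ℝ) + 1) ^ q ≤ 4 ^ q * ((N : ℝ) * δ) ^ q := by
    rw [← mul_pow, ← mul_pow]
    exact pow_le_pow_left₀ (by positivity) (by nlinarith [(Nat.one_le_cast (α := ℝ)).mpr hN]) q
  simp only [habs, ← mul_sum]
  calc (2 * δ) ^ q * ∑ t ∈ range (2 ^ N), walk v N (r * 2 ^ N + t) ^ (2 * q)
      ≤ (2 * δ) ^ q * (2 ^ N * (4 ^ (q ^ 2) * (N + 1) ^ q)) := by
        gcongr; exact sum_walk_pow_le v q N r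
    _ = 2 ^ N * 4 ^ (q ^ 2) * ((2 * δ) ^ q * ((N : ℝ) + 1) ^ q) := by ring
    _ ≤ 2 ^ N * 4 ^ (q ^ 2) * (4 ^ q * ((N : ℝ) * δ) ^ q) := by gcongr
    _ = 2 ^ N * (4 ^ (q ^ 2) * 4 ^ q * ((N : ℝ) * δ) ^ q) := by ring

end DiscreteMoments

/-- higher conditional moments of the coarse increments: for every `q ≥ 1`
there is `C_q > 0` with `E[|dX^i_{n+1}|^{2q} | F_{nN}] ≤ C_q θ^q` a.e., `θ = Nδ`. -/
theorem statement9 :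
    ∀ q : ℕ, 1 ≤ q → ∃ C : ℝ, 0 < C ∧
      ∀ δ : ℝ, 0 < δ → ∀ N : ℕ, 1 ≤ N → ∀ n : ℕ, n < N ^ 4 →
        (∀ᵐ x ∂P, (P[fun y => (_root_.abs (dX1 δ N n y)) ^ (2 * q)|Ffil (n * N)]) x ≤
          C * ((N : ℝ) * δ) ^ q) ∧
        (∀ᵐ x ∂P, (P[fun y => (_root_.abs (dX2 δ N n y)) ^ (2 * q)|Ffil (n * N)]) x ≤
          C * ((N : ℝ) * δ) ^ q) := by
  intro q _
  refine ⟨4 ^ (q ^ 2) * 4 ^ q, by positivity, fun δ hδ N hN n _ => ⟨?_, ?_⟩⟩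
  · exact DiscreteMoments.ae_condExp_abs_sum_rad_pow_le (-1) hδ.le hN (n * N) q
  · exact DiscreteMoments.ae_condExp_abs_sum_rad_pow_le 1 hδ.le hN (n * N) q

end
end

section
/- Let T > 0, N ≥ 1 an integer, δ = T N^{−5}, ε = 1/N, and assume N√(2δ) ≤ ε. Then {x ∈ [0,1) : |X_n(x)| ≤ 1 − ε for all 0 ≤ n ≤ N⁴} ⊆ {x ∈ [0,1) : |B̃¹_k(x)| ≤ 1 for all 0 ≤ k ≤ N⁵}, where B̃¹_k = √δ Σ_{l=1}^k ε_l. -/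
/-!
Every step of the walk moves exactly one coordinate by `±√(2δ)`, so `|B|` grows by at most
`√(2δ)` per step. Between two consecutive coarse times there are fewer than `N` steps, hence
`|B_k| ≤ (1 - ε) + N√(2δ) ≤ 1` for every `k ≤ N⁵`. Finally `B¹_k + B²_k = √2 · B̃¹_k`, and
`|a + b| ≤ √2 · √(a² + b²)`.
-/

open MeasureTheory Filter
open scoped ENNReal MeasureTheory

noncomputable section

lemma rad_eq_one_or_neg_one (l : ℕ) (x : ℝ) : rad l x = 1 ∨ rad l x = -1 := by
  unfold rad; split <;> simp

lemma dB1_add_dB2 (δ : ℝ) (l : ℕ) (x : ℝ) :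
    dB1 δ l x + dB2 δ l x = Real.sqrt (2 * δ) * rad l x := by
  unfold dB1 dB2
  rcases rad_eq_one_or_neg_one (l - 1) x with h | h <;> norm_num [h, mul_comm]

lemma dB1_sq_add_dB2_sq (δ : ℝ) (l : ℕ) (x : ℝ) :
    dB1 δ l x ^ 2 + dB2 δ l x ^ 2 = Real.sqrt (2 * δ) ^ 2 := by
  unfold dB1 dB2
  rcases rad_eq_one_or_neg_one (l - 1) x with h | h <;>
    rcases rad_eq_one_or_neg_one l x with h' | h' <;> norm_num [h, h']

lemma B1_add_B2 (δ : ℝ) (k : ℕ) (x : ℝ) :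
    B1 δ k x + B2 δ k x = Real.sqrt (2 * δ) * ∑ l ∈ Finset.Icc 1 k, rad l x := by
  simp only [B1, B2, ← Finset.sum_add_distrib, Finset.mul_sum, dB1_add_dB2]

lemma Bnorm_eq_norm (δ : ℝ) (k : ℕ) (x : ℝ) :
    Bnorm δ k x = ‖(B1 δ k x : ℂ) + B2 δ k x * Complex.I‖ :=
  (Complex.norm_add_mul_I _ _).symm

lemma Bnorm_succ_le (δ : ℝ) (k : ℕ) (x : ℝ) :
    Bnorm δ (k + 1) x ≤ Bnorm δ k x + Real.sqrt (2 * δ) := by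
  have hB1 : B1 δ (k + 1) x = B1 δ k x + dB1 δ (k + 1) x :=
    Finset.sum_Icc_succ_top (Nat.le_add_left 1 k) _
  have hB2 : B2 δ (k + 1) x = B2 δ k x + dB2 δ (k + 1) x :=
    Finset.sum_Icc_succ_top (Nat.le_add_left 1 k) _
  have hstep : ‖(dB1 δ (k + 1) x : ℂ) + dB2 δ (k + 1) x * Complex.I‖ = Real.sqrt (2 * δ) := by
    rw [Complex.norm_add_mul_I, dB1_sq_add_dB2_sq, Real.sqrt_sq (Real.sqrt_nonneg _)]
  rw [Bnorm_eq_norm, Bnorm_eq_norm, ← hstep, hB1, hB2]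
  push_cast
  calc _ = ‖((B1 δ k x : ℂ) + B2 δ k x * Complex.I) +
        ((dB1 δ (k + 1) x : ℂ) + dB2 δ (k + 1) x * Complex.I)‖ := by ring_nf
    _ ≤ _ := norm_add_le _ _

lemma Bnorm_add_le (δ : ℝ) (m r : ℕ) (x : ℝ) :
    Bnorm δ (m + r) x ≤ Bnorm δ m x + r * Real.sqrt (2 * δ) := by
  induction r with
  | zero => simp
  | succ r ih =>
    calc Bnorm δ (m + r + 1) x ≤ Bnorm δ (m + r) x + Real.sqrt (2 * δ) := Bnorm_succ_le δ _ x
      _ ≤ Bnorm δ m x + (r + 1 : ℕ) * Real.sqrt (2 * δ) := by push_cast; linarith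

lemma Bnorm_le_Bnorm_div_mul_add {N : ℕ} (hN : 1 ≤ N) (δ : ℝ) (k : ℕ) (x : ℝ) :
    Bnorm δ k x ≤ Bnorm δ (k / N * N) x + N * Real.sqrt (2 * δ) := by
  have hr : ((k % N : ℕ) : ℝ) ≤ N := by exact_mod_cast (Nat.mod_lt k hN).le
  calc Bnorm δ k x = Bnorm δ (k / N * N + k % N) x := by rw [Nat.div_add_mod']
    _ ≤ Bnorm δ (k / N * N) x + (k % N : ℕ) * Real.sqrt (2 * δ) := Bnorm_add_le δ _ _ x
    _ ≤ _ := by gcongr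

lemma abs_sqrt_mul_sum_rad_le_Bnorm (δ : ℝ) (k : ℕ) (x : ℝ) :
    |Real.sqrt δ * ∑ l ∈ Finset.Icc 1 k, rad l x| ≤ Bnorm δ k x := by
  apply Real.abs_le_sqrt
  have hsum : (B1 δ k x + B2 δ k x) ^ 2 =
      2 * (Real.sqrt δ * ∑ l ∈ Finset.Icc 1 k, rad l x) ^ 2 := by
    rw [B1_add_B2, Real.sqrt_mul zero_le_two, mul_assoc, mul_pow, Real.sq_sqrt zero_le_two]
  linarith [add_sq_le (a := B1 δ k x) (b := B2 δ k x)]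

theorem statement12_general (N : ℕ) (hN : 1 ≤ N) (δ ε : ℝ)
    (h : (N : ℝ) * Real.sqrt (2 * δ) ≤ ε) :
    {x ∈ Set.Ico (0 : ℝ) 1 | ∀ n : ℕ, n ≤ N ^ 4 → Bnorm δ (n * N) x ≤ 1 - ε} ⊆
      {x ∈ Set.Ico (0 : ℝ) 1 | ∀ k : ℕ, k ≤ N ^ 5 →
        |Real.sqrt δ * ∑ l ∈ Finset.Icc 1 k, rad l x| ≤ 1} := by
  rintro x ⟨hx, hcoarse⟩
  refine ⟨hx, fun k hk => ?_⟩
  have hkN : k / N ≤ N ^ 4 := Nat.div_le_of_le_mul (by rwa [← pow_succ'])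
  calc |Real.sqrt δ * ∑ l ∈ Finset.Icc 1 k, rad l x| ≤ Bnorm δ k x :=
        abs_sqrt_mul_sum_rad_le_Bnorm δ k x
    _ ≤ Bnorm δ (k / N * N) x + N * Real.sqrt (2 * δ) := Bnorm_le_Bnorm_div_mul_add hN δ k x
    _ ≤ 1 := by linarith [hcoarse _ hkN]

/-- if the coarse walk never leaves `(1-ε)𝔻` then the rotated
one-dimensional Rademacher walk never leaves `[-1,1]`. -/
theorem statement12 (T : ℝ) (hT : 0 < T) (N : ℕ) (hN : 1 ≤ N) (δ ε : ℝ)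
    (hδ : δ = T / (N : ℝ) ^ 5) (hε : ε = 1 / (N : ℝ))
    (h : (N : ℝ) * Real.sqrt (2 * δ) ≤ ε) :
    {x ∈ Set.Ico (0 : ℝ) 1 | ∀ n : ℕ, n ≤ N ^ 4 → Bnorm δ (n * N) x ≤ 1 - ε} ⊆
      {x ∈ Set.Ico (0 : ℝ) 1 | ∀ k : ℕ, k ≤ N ^ 5 →
        |Real.sqrt δ * ∑ l ∈ Finset.Icc 1 k, rad l x| ≤ 1} :=
  statement12_general N hN δ ε h

end
end

section
/- There exists a function c : (0,∞) → [0,∞) with c(T) → 0 as T → ∞ such that for every T > 0 and every integer N ≥ 2T (with δ = T N^{−5}, ε = 1/N): P( |X_n| ≤ 1 − ε for all 0 ≤ n ≤ N⁴ ) ≤ c(T). In other words, the probability that the discrete stopping time τ_ε exceeds T is bounded by c(T) uniformly in N. -/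
open MeasureTheory Filter
open scoped ENNReal MeasureTheory

noncomputable section

/-!
`|B_k|² - 2δk` is a martingale for the dyadic filtration: the cross term `⟨B_k, dB_{k+1}⟩` is
`ε_{k+1}` times a function of `ε_0, …, ε_k`, so it integrates to zero over any event
determined by `ε_0, …, ε_k`. Let `A_k` (`stayedInDisc δ k`) be the event that `|B_j| ≤ 1` for
all `j ≤ k`. Integrating `|B_{k+1}|² = |B_k|² + 2⟨B_k, dB_{k+1}⟩ + 2δ` over `A_k`, and losing
at most `4` per unit of probability on the exit set `A_k \ A_{k+1}`, one gets by telescoping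
`2δK P(A_K) ≤ 4`. With `K = N⁵` we have `δK = T`, so `P(A_{N⁵}) ≤ 2/T`. Finally every step of
the walk has length `√(2δ) ≤ N⁻²`, so between two coarse times the walk moves by at most
`1/N`; staying in `(1 - 1/N)𝔻` at the coarse times therefore keeps the walk in `𝔻` up to
time `N⁵`.
-/

open Set Function

namespace RademacherWalk

theorem floor_natCast_mul_eq_of_mem_Ico {n m : ℕ} (hn : 0 < n) {x : ℝ}
    (hx : x ∈ Ico ((m : ℝ) / n) ((m + 1) / n)) : ⌊(n : ℝ) * x⌋ = m := by
  have hn' : (0 : ℝ) < n := by exact_mod_cast hn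
  rw [mem_Ico, div_le_iff₀ hn', lt_div_iff₀ hn'] at hx
  rw [Int.floor_eq_iff]
  push_cast
  constructor <;> linarith

theorem setIntegral_Ico_eq_sum_of_factorsThrough {n : ℕ} (hn : 0 < n) {F : ℝ → ℝ}
    (hF : F.FactorsThrough fun x => ⌊(n : ℝ) * x⌋) :
    ∫ x in Ico 0 1, F x = (∑ m ∈ Finset.range n, F (m / n)) / n := by
  have hn' : (0 : ℝ) < n := by exact_mod_cast hn
  set a : ℕ → ℝ := fun m => m / n
  have ha : Monotone a := fun i j h => by
    simp only [a]; gcongr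
  have hpiece (m : ℕ) : EqOn F (fun _ => F (a m)) (Ico (a m) (a (m + 1))) := by
    intro x hx
    have hx' : x ∈ Ico ((m : ℝ) / n) ((m + 1) / n) := by simpa [a] using hx
    have hm : a m ∈ Ico ((m : ℝ) / n) ((m + 1) / n) := by
      refine ⟨le_rfl, ?_⟩; simp only [a]; gcongr; linarith
    exact hF ((floor_natCast_mul_eq_of_mem_Ico hn hx').trans
      (floor_natCast_mul_eq_of_mem_Ico hn hm).symm)
  have hunion : Ico 0 1 = ⋃ m ∈ Finset.range n, Ico (a m) (a (m + 1)) := by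
    refine Subset.antisymm ?_ (iUnion₂_subset fun m hm => Ico_subset_Ico ?_ ?_)
    · simpa [a, hn'.ne'] using Ico_subset_biUnion_Ico n a
    · simp only [a]; positivity
    · simpa [a, hn'.ne'] using ha (Finset.mem_range.1 hm)
  have hdisj : Pairwise (Disjoint on fun m => Ico (a m) (a (m + 1))) := by
    simpa using ha.pairwise_disjoint_on_Ico_succ
  rw [hunion, integral_biUnion_finset _ (fun _ _ => measurableSet_Ico) (hdisj.set_pairwise _)
    fun m _ => (integrableOn_const (by simp)).congr_fun (hpiece m).symm measurableSet_Ico,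
    Finset.sum_div]
  refine Finset.sum_congr rfl fun m _ => ?_
  rw [setIntegral_congr_fun measurableSet_Ico (hpiece m), setIntegral_const,
    Real.volume_real_Ico_of_le (ha m.le_succ), smul_eq_mul]
  simp only [a]; push_cast; field_simp; ring

theorem factorsThrough_floor_two_pow_mul_of_le {α : Type*} {f : ℝ → α} {r s : ℕ} (hrs : r ≤ s)
    (hf : f.FactorsThrough fun x => ⌊(2 : ℝ) ^ r * x⌋) :
    f.FactorsThrough fun x => ⌊(2 : ℝ) ^ s * x⌋ := by
  have hfloor (x : ℝ) : ⌊(2 : ℝ) ^ r * x⌋ = ⌊(2 : ℝ) ^ s * x⌋ / ((2 ^ (s - r) : ℕ) : ℤ) := by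
    rw [← Int.floor_div_natCast, ← pow_sub_mul_pow 2 hrs]
    push_cast
    field_simp
  exact fun x y h => hf (by simp only [hfloor, h])

theorem rad_factorsThrough (k : ℕ) : (rad k).FactorsThrough fun x => ⌊(2 : ℝ) ^ (k + 1) * x⌋ :=
  fun x y h => by simp only [rad, h]

theorem rad_natCast_div (r m : ℕ) : rad r (m / 2 ^ (r + 1)) = if Odd m then 1 else -1 := by
  simp [rad, mul_div_cancel₀ _ (by positivity : (2 : ℝ) ^ (r + 1) ≠ 0), Int.odd_coe_nat]

theorem sum_range_two_mul {M : Type*} [AddCommMonoid M] (f : ℕ → M) (n : ℕ) :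
    ∑ m ∈ Finset.range (2 * n), f m = ∑ i ∈ Finset.range n, (f (2 * i) + f (2 * i + 1)) := by
  induction n with
  | zero => simp
  | succ n ih =>
    rw [Nat.mul_succ, Finset.sum_range_succ, Finset.sum_range_succ, Finset.sum_range_succ, ih,
      add_assoc]

theorem integral_mul_rad_eq_zero {r : ℕ} {G : ℝ → ℝ}
    (hG : G.FactorsThrough fun x => ⌊(2 : ℝ) ^ r * x⌋) : ∫ x, G x * rad r x ∂P = 0 := by
  have hfac : (fun x => G x * rad r x).FactorsThrough fun x => ⌊((2 ^ (r + 1) : ℕ) : ℝ) * x⌋ := by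
    intro x y h
    push_cast at h
    simp only [factorsThrough_floor_two_pow_mul_of_le r.le_succ hG h, rad_factorsThrough r h]
  rw [P, setIntegral_Ico_eq_sum_of_factorsThrough (by positivity) hfac, pow_succ',
    sum_range_two_mul, Finset.sum_eq_zero, zero_div]
  -- On the two halves of a dyadic interval of generation `r`, `G` takes the same value while
  -- `rad r` takes the values `-1` and `1`.
  intro i _
  have hfloor (j : ℕ) (hj : j < 2) : ⌊(2 : ℝ) ^ r * ((2 * i + j : ℕ) / 2 ^ (r + 1))⌋ = i := by
    have hhalf (y : ℝ) : (2 : ℝ) ^ r * (y / 2 ^ (r + 1)) = y / 2 := by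
      rw [pow_succ]; field_simp
    rw [hhalf, Int.floor_eq_iff]
    push_cast
    interval_cases j <;> constructor <;> linarith
  have hG' : G ((2 * i : ℕ) / 2 ^ (r + 1)) = G ((2 * i + 1 : ℕ) / 2 ^ (r + 1)) :=
    hG ((hfloor 0 (by norm_num)).trans (hfloor 1 (by norm_num)).symm)
  simp only [← pow_succ', Nat.cast_pow, Nat.cast_ofNat, rad_natCast_div, hG']
  simp [Nat.odd_iff]

theorem mul_natCast_mul_le_of_drift {I a : ℕ → ℝ} {c C : ℝ} (hc : 0 ≤ c) (ha : Antitone a)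
    (hI₀ : 0 ≤ I 0) (hI : ∀ k, I k + c * a k - C * (a k - a (k + 1)) ≤ I (k + 1)) (k : ℕ) :
    c * k * a k ≤ I k + C * (a 0 - a k) := by
  induction k with
  | zero => simpa using hI₀
  | succ k ih =>
    have hmono : c * (k + 1) * a (k + 1) ≤ c * (k + 1) * a k :=
      mul_le_mul_of_nonneg_left (ha k.le_succ) (by positivity)
    push_cast
    linarith [hI k]

instance : IsProbabilityMeasure P := ⟨by simp [P]⟩

theorem rad_eq_one_or_eq_neg_one (k : ℕ) (x : ℝ) : rad k x = 1 ∨ rad k x = -1 := by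
  unfold rad; split_ifs <;> simp

theorem measurable_rad (k : ℕ) : Measurable (rad k) :=
  Measurable.ite ((Int.measurable_floor.comp (measurable_const.mul measurable_id))
    (MeasurableSet.of_discrete (s := {n : ℤ | Odd n}))) measurable_const measurable_const

section Walk

variable {δ : ℝ}

def incrInner (δ : ℝ) (k : ℕ) (x : ℝ) : ℝ :=
  B1 δ k x * dB1 δ (k + 1) x + B2 δ k x * dB2 δ (k + 1) x

theorem dB1_sq_add_dB2_sq (hδ : 0 ≤ δ) (l : ℕ) (x : ℝ) :
    dB1 δ l x ^ 2 + dB2 δ l x ^ 2 = 2 * δ := by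
  have hsqrt : Real.sqrt (2 * δ) ^ 2 = 2 * δ := Real.sq_sqrt (by linarith)
  rcases rad_eq_one_or_eq_neg_one (l - 1) x with h | h <;>
  rcases rad_eq_one_or_eq_neg_one l x with h' | h' <;>
  simp only [dB1, dB2, h, h', mul_pow, hsqrt] <;> norm_num

theorem B1_succ (k : ℕ) (x : ℝ) : B1 δ (k + 1) x = B1 δ k x + dB1 δ (k + 1) x :=
  Finset.sum_Icc_succ_top (by omega) _

theorem B2_succ (k : ℕ) (x : ℝ) : B2 δ (k + 1) x = B2 δ k x + dB2 δ (k + 1) x :=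
  Finset.sum_Icc_succ_top (by omega) _

theorem Bnorm_zero (x : ℝ) : Bnorm δ 0 x = 0 := by
  simp [Bnorm, B1, B2]

theorem Bnorm_nonneg (δ : ℝ) (k : ℕ) (x : ℝ) : 0 ≤ Bnorm δ k x :=
  Real.sqrt_nonneg _

theorem Bnorm_sq (k : ℕ) (x : ℝ) : Bnorm δ k x ^ 2 = B1 δ k x ^ 2 + B2 δ k x ^ 2 :=
  Real.sq_sqrt (by positivity)

theorem Bnorm_succ_sq (hδ : 0 ≤ δ) (k : ℕ) (x : ℝ) :
    Bnorm δ (k + 1) x ^ 2 = Bnorm δ k x ^ 2 + 2 * incrInner δ k x + 2 * δ := by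
  rw [Bnorm_sq, Bnorm_sq, B1_succ, B2_succ, incrInner, ← dB1_sq_add_dB2_sq hδ (k + 1) x]
  ring

theorem abs_incrInner_le (hδ : 0 ≤ δ) (k : ℕ) (x : ℝ) :
    |incrInner δ k x| ≤ Bnorm δ k x * Real.sqrt (2 * δ) := by
  rw [Bnorm, ← dB1_sq_add_dB2_sq hδ (k + 1) x, ← Real.sqrt_mul (by positivity), incrInner]
  apply Real.abs_le_sqrt
  nlinarith [sq_nonneg (B1 δ k x * dB2 δ (k + 1) x - B2 δ k x * dB1 δ (k + 1) x)]

theorem Bnorm_succ_le (hδ : 0 ≤ δ) (k : ℕ) (x : ℝ) :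
    Bnorm δ (k + 1) x ≤ Bnorm δ k x + Real.sqrt (2 * δ) := by
  have hnorm := Bnorm_nonneg δ k x
  have hsqrt : Real.sqrt (2 * δ) ^ 2 = 2 * δ := Real.sq_sqrt (by linarith)
  refine le_of_sq_le_sq ?_ (by positivity)
  rw [Bnorm_succ_sq hδ]
  nlinarith [le_abs_self (incrInner δ k x), abs_incrInner_le hδ k x]

theorem Bnorm_add_le (hδ : 0 ≤ δ) (m r : ℕ) (x : ℝ) :
    Bnorm δ (m + r) x ≤ Bnorm δ m x + r * Real.sqrt (2 * δ) := by
  induction r with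
  | zero => simp
  | succ r ih =>
    rw [← add_assoc, Nat.cast_succ]
    linarith [Bnorm_succ_le hδ (m + r) x]

theorem Bnorm_le (hδ : 0 ≤ δ) (k : ℕ) (x : ℝ) : Bnorm δ k x ≤ k * Real.sqrt (2 * δ) := by
  simpa [Bnorm_zero] using Bnorm_add_le hδ 0 k x

theorem measurable_dB1 (δ : ℝ) (l : ℕ) : Measurable (dB1 δ l) :=
  ((Measurable.ite (measurable_rad (l - 1) (measurableSet_singleton (-1))) measurable_const
    measurable_const).mul (measurable_rad l)).mul measurable_const

theorem measurable_dB2 (δ : ℝ) (l : ℕ) : Measurable (dB2 δ l) :=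
  ((Measurable.ite (measurable_rad (l - 1) (measurableSet_singleton 1)) measurable_const
    measurable_const).mul (measurable_rad l)).mul measurable_const

theorem measurable_Bnorm (δ : ℝ) (k : ℕ) : Measurable (Bnorm δ k) :=
  (((Finset.measurable_sum _ fun l _ => measurable_dB1 δ l).pow_const 2).add
    ((Finset.measurable_sum _ fun l _ => measurable_dB2 δ l).pow_const 2)).sqrt

theorem measurable_incrInner (δ : ℝ) (k : ℕ) : Measurable (incrInner δ k) :=
  ((Finset.measurable_sum _ fun l _ => measurable_dB1 δ l).mul (measurable_dB1 δ (k + 1))).add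
    ((Finset.measurable_sum _ fun l _ => measurable_dB2 δ l).mul (measurable_dB2 δ (k + 1)))

theorem integrable_Bnorm_sq (hδ : 0 ≤ δ) (k : ℕ) : Integrable (fun x => Bnorm δ k x ^ 2) P :=
  .of_bound ((measurable_Bnorm δ k).pow_const 2).aestronglyMeasurable ((k * Real.sqrt (2 * δ)) ^ 2)
    (ae_of_all _ fun x => by
      rw [Real.norm_of_nonneg (sq_nonneg _)]
      exact pow_le_pow_left₀ (Real.sqrt_nonneg _) (Bnorm_le hδ k x) 2)

theorem integrable_incrInner (hδ : 0 ≤ δ) (k : ℕ) : Integrable (incrInner δ k) P :=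
  .of_bound (measurable_incrInner δ k).aestronglyMeasurable
    (k * Real.sqrt (2 * δ) * Real.sqrt (2 * δ))
    (ae_of_all _ fun x => (abs_incrInner_le hδ k x).trans
      (mul_le_mul_of_nonneg_right (Bnorm_le hδ k x) (Real.sqrt_nonneg _)))

theorem rad_factorsThrough_of_le {j k : ℕ} (h : j ≤ k) :
    (rad j).FactorsThrough fun x => ⌊(2 : ℝ) ^ (k + 1) * x⌋ :=
  factorsThrough_floor_two_pow_mul_of_le (by omega) (rad_factorsThrough j)

theorem dB1_factorsThrough {l k : ℕ} (h : l ≤ k) :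
    (dB1 δ l).FactorsThrough fun x => ⌊(2 : ℝ) ^ (k + 1) * x⌋ := fun _ _ hxy => by
  simp only [dB1, rad_factorsThrough_of_le h hxy,
    rad_factorsThrough_of_le ((l.sub_le 1).trans h) hxy]

theorem dB2_factorsThrough {l k : ℕ} (h : l ≤ k) :
    (dB2 δ l).FactorsThrough fun x => ⌊(2 : ℝ) ^ (k + 1) * x⌋ := fun _ _ hxy => by
  simp only [dB2, rad_factorsThrough_of_le h hxy,
    rad_factorsThrough_of_le ((l.sub_le 1).trans h) hxy]

theorem B1_factorsThrough {j k : ℕ} (h : j ≤ k) :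
    (B1 δ j).FactorsThrough fun x => ⌊(2 : ℝ) ^ (k + 1) * x⌋ := fun _ _ hxy =>
  Finset.sum_congr rfl fun _ hl => dB1_factorsThrough ((Finset.mem_Icc.1 hl).2.trans h) hxy

theorem B2_factorsThrough {j k : ℕ} (h : j ≤ k) :
    (B2 δ j).FactorsThrough fun x => ⌊(2 : ℝ) ^ (k + 1) * x⌋ := fun _ _ hxy =>
  Finset.sum_congr rfl fun _ hl => dB2_factorsThrough ((Finset.mem_Icc.1 hl).2.trans h) hxy

theorem Bnorm_factorsThrough {j k : ℕ} (h : j ≤ k) :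
    (Bnorm δ j).FactorsThrough fun x => ⌊(2 : ℝ) ^ (k + 1) * x⌋ := fun _ _ hxy => by
  simp only [Bnorm, B1_factorsThrough h hxy, B2_factorsThrough h hxy]

def stayedInDisc (δ : ℝ) (k : ℕ) : Set ℝ := {x | ∀ j ≤ k, Bnorm δ j x ≤ 1}

theorem measurableSet_stayedInDisc (δ : ℝ) (k : ℕ) : MeasurableSet (stayedInDisc δ k) := by
  simp only [stayedInDisc, ofPred_forall]
  exact .iInter fun j => .iInter fun _ => measurableSet_le (measurable_Bnorm δ j) measurable_const

theorem stayedInDisc_antitone (δ : ℝ) : Antitone (stayedInDisc δ) :=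
  fun _ _ hkl _ hx j hj => hx j (hj.trans hkl)

theorem setIntegral_incrInner_eq_zero (k : ℕ) :
    ∫ x in stayedInDisc δ k, incrInner δ k x ∂P = 0 := by
  set G := (stayedInDisc δ k).indicator fun x => (B1 δ k x * (if rad k x = -1 then 1 else 0) +
    B2 δ k x * (if rad k x = 1 then 1 else 0)) * Real.sqrt (2 * δ)
  have hG : G.FactorsThrough fun x => ⌊(2 : ℝ) ^ (k + 1) * x⌋ := by
    intro x y h
    have hmem : x ∈ stayedInDisc δ k ↔ y ∈ stayedInDisc δ k :=
      forall₂_congr fun j hj => by rw [Bnorm_factorsThrough hj h]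
    by_cases hx : x ∈ stayedInDisc δ k
    · simp only [G, indicator_of_mem hx, indicator_of_mem (hmem.1 hx), B1_factorsThrough le_rfl h,
        B2_factorsThrough le_rfl h, rad_factorsThrough k h]
    · simp only [G, indicator_of_notMem hx, indicator_of_notMem (mt hmem.2 hx)]
  have hincr : (stayedInDisc δ k).indicator (incrInner δ k) = fun x => G x * rad (k + 1) x := by
    ext x
    by_cases hx : x ∈ stayedInDisc δ k
    · simp only [G, indicator_of_mem hx, incrInner, dB1, dB2, Nat.add_sub_cancel]
      ring
    · simp only [G, indicator_of_notMem hx, zero_mul]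
  rw [← integral_indicator (measurableSet_stayedInDisc δ k), hincr, integral_mul_rad_eq_zero hG]

theorem setIntegral_Bnorm_succ_sq (hδ : 0 ≤ δ) (k : ℕ) :
    ∫ x in stayedInDisc δ k, Bnorm δ (k + 1) x ^ 2 ∂P =
      ∫ x in stayedInDisc δ k, Bnorm δ k x ^ 2 ∂P + 2 * δ * P.real (stayedInDisc δ k) := by
  simp_rw [Bnorm_succ_sq hδ]
  have hsq := (integrable_Bnorm_sq hδ k).integrableOn (s := stayedInDisc δ k)
  have hincr := ((integrable_incrInner hδ k).const_mul 2).integrableOn (s := stayedInDisc δ k)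
  rw [integral_add (f := fun x => Bnorm δ k x ^ 2 + 2 * incrInner δ k x) (Integrable.add hsq hincr)
      (integrable_const _), integral_add hsq hincr,
    integral_const_mul, setIntegral_incrInner_eq_zero, setIntegral_const, smul_eq_mul]
  ring

theorem Bnorm_succ_sq_le_four (hδ0 : 0 ≤ δ) (hδ : 2 * δ ≤ 1) {k : ℕ} {x : ℝ}
    (hx : x ∈ stayedInDisc δ k) : Bnorm δ (k + 1) x ^ 2 ≤ 4 := by
  have hsqrt : Real.sqrt (2 * δ) ≤ 1 := Real.sqrt_le_one.2 hδ
  have hle : Bnorm δ (k + 1) x ≤ 2 := by linarith [Bnorm_succ_le hδ0 k x, hx k le_rfl]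
  nlinarith [Bnorm_nonneg δ (k + 1) x]

theorem setIntegral_Bnorm_sq_drift (hδ0 : 0 ≤ δ) (hδ : 2 * δ ≤ 1) (k : ℕ) :
    ∫ x in stayedInDisc δ k, Bnorm δ k x ^ 2 ∂P + 2 * δ * P.real (stayedInDisc δ k) -
        4 * (P.real (stayedInDisc δ k) - P.real (stayedInDisc δ (k + 1))) ≤
      ∫ x in stayedInDisc δ (k + 1), Bnorm δ (k + 1) x ^ 2 ∂P := by
  have hsub := stayedInDisc_antitone δ k.le_succ
  have hsplit := integral_inter_add_sdiff (measurableSet_stayedInDisc δ (k + 1))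
    (integrable_Bnorm_sq hδ0 (k + 1)).integrableOn (s := stayedInDisc δ k)
  rw [inter_eq_right.2 hsub, setIntegral_Bnorm_succ_sq hδ0] at hsplit
  have hexit : ∫ x in stayedInDisc δ k \ stayedInDisc δ (k + 1), Bnorm δ (k + 1) x ^ 2 ∂P ≤
      4 * (P.real (stayedInDisc δ k) - P.real (stayedInDisc δ (k + 1))) := by
    rw [← measureReal_sdiff hsub (measurableSet_stayedInDisc δ (k + 1))]
    refine (Real.le_norm_self _).trans (norm_setIntegral_le_of_norm_le_const (measure_lt_top _ _)
      fun x hx => ?_)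
    rw [Real.norm_of_nonneg (sq_nonneg _)]
    exact Bnorm_succ_sq_le_four hδ0 hδ hx.1
  linarith

theorem measureReal_stayedInDisc_le (hδ0 : 0 ≤ δ) (hδ : 2 * δ ≤ 1) (K : ℕ) :
    2 * δ * K * P.real (stayedInDisc δ K) ≤ 4 := by
  have hdrift := mul_natCast_mul_le_of_drift
    (I := fun k => ∫ x in stayedInDisc δ k, Bnorm δ k x ^ 2 ∂P)
    (a := fun k => P.real (stayedInDisc δ k)) (by positivity)
    (fun _ _ h => measureReal_mono (stayedInDisc_antitone δ h))
    (setIntegral_nonneg (measurableSet_stayedInDisc δ 0) fun _ _ => sq_nonneg _)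
    (setIntegral_Bnorm_sq_drift hδ0 hδ) K
  have hend : ∫ x in stayedInDisc δ K, Bnorm δ K x ^ 2 ∂P ≤ 1 * P.real (stayedInDisc δ K) :=
    (Real.le_norm_self _).trans (norm_setIntegral_le_of_norm_le_const (measure_lt_top _ _)
      fun x hx => by
        rw [Real.norm_of_nonneg (sq_nonneg _)]
        exact pow_le_one₀ (Bnorm_nonneg δ K x) (hx K le_rfl))
  have h0 : P.real (stayedInDisc δ 0) ≤ 1 := measureReal_le_one
  have hK : 0 ≤ P.real (stayedInDisc δ K) := measureReal_nonneg
  linarith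

theorem Bnorm_le_of_forall_Bnorm_mul_le (hδ : 0 ≤ δ) {N M : ℕ} (hN : 0 < N) {ρ x : ℝ}
    (hx : ∀ n ≤ M, Bnorm δ (n * N) x ≤ ρ) {j : ℕ} (hj : j ≤ M * N) :
    Bnorm δ j x ≤ ρ + N * Real.sqrt (2 * δ) := by
  have hrem : ((j % N : ℕ) : ℝ) ≤ N := by exact_mod_cast (Nat.mod_lt j hN).le
  calc Bnorm δ j x = Bnorm δ (j / N * N + j % N) x := by rw [Nat.div_add_mod' j N]
    _ ≤ Bnorm δ (j / N * N) x + (j % N : ℕ) * Real.sqrt (2 * δ) := Bnorm_add_le hδ _ _ x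
    _ ≤ ρ + N * Real.sqrt (2 * δ) :=
      add_le_add (hx _ (Nat.div_le_of_le_mul (by rwa [mul_comm])))
        (mul_le_mul_of_nonneg_right hrem (Real.sqrt_nonneg _))

end Walk

theorem sqrt_two_mul_div_pow_five_le {T : ℝ} {N : ℕ} (hN : 2 * T ≤ N) :
    Real.sqrt (2 * (T / (N : ℝ) ^ 5)) ≤ 1 / (N : ℝ) ^ 2 := by
  rcases (Nat.cast_nonneg (α := ℝ) N).eq_or_lt with hN0 | hN0
  · simp [← hN0]
  refine Real.sqrt_le_iff.2 ⟨by positivity, ?_⟩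
  calc 2 * (T / (N : ℝ) ^ 5) = 2 * T / (N : ℝ) ^ 5 := by ring
    _ ≤ N / (N : ℝ) ^ 5 := by gcongr
    _ = (1 / (N : ℝ) ^ 2) ^ 2 := by field_simp

theorem coarse_subset_stayedInDisc {T : ℝ} {N : ℕ} (hT : 0 < T) (hN : 2 * T ≤ N) :
    {x | ∀ n ≤ N ^ 4, Bnorm (T / (N : ℝ) ^ 5) (n * N) x ≤ 1 - 1 / (N : ℝ)} ⊆
      stayedInDisc (T / (N : ℝ) ^ 5) (N ^ 5) := by
  have hNpos : (0 : ℝ) < N := by linarith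
  have hstep : (N : ℝ) * Real.sqrt (2 * (T / (N : ℝ) ^ 5)) ≤ 1 / N :=
    calc (N : ℝ) * Real.sqrt (2 * (T / (N : ℝ) ^ 5)) ≤ N * (1 / (N : ℝ) ^ 2) := by
          gcongr; exact sqrt_two_mul_div_pow_five_le hN
      _ = 1 / N := by field_simp
  intro x hx j hj
  have hj' : j ≤ N ^ 4 * N := by rwa [← pow_succ]
  linarith [Bnorm_le_of_forall_Bnorm_mul_le (by positivity) (by exact_mod_cast hNpos) hx hj']

theorem measureReal_stayedInDisc_pow_five_le {T : ℝ} {N : ℕ} (hT : 0 < T) (hN : 2 * T ≤ N) :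
    P.real (stayedInDisc (T / (N : ℝ) ^ 5) (N ^ 5)) ≤ 2 / T := by
  have hN1 : (1 : ℝ) ≤ N := Nat.one_le_cast.2 (by exact_mod_cast (by linarith : (0 : ℝ) < N))
  have hδ : 2 * (T / (N : ℝ) ^ 5) ≤ 1 := Real.sqrt_le_one.1 ((sqrt_two_mul_div_pow_five_le hN).trans
    (div_le_one_of_le₀ (one_le_pow₀ hN1) (by positivity)))
  have hK : 2 * (T / (N : ℝ) ^ 5) * ((N ^ 5 : ℕ) : ℝ) = 2 * T := by push_cast; field_simp
  rw [le_div_iff₀ hT]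
  nlinarith [measureReal_stayedInDisc_le (by positivity) hδ (N ^ 5)]

end RademacherWalk

open RademacherWalk

/-- the probability that the discrete stopping time exceeds `T` is bounded
by a quantity `c(T) → 0` uniformly in `N`. -/
theorem statement13 :
    ∃ c : ℝ → ℝ, (∀ T, 0 ≤ c T) ∧ Tendsto c atTop (nhds 0) ∧
      ∀ T : ℝ, 0 < T → ∀ N : ℕ, 2 * T ≤ (N : ℝ) →
        P {x | ∀ n : ℕ, n ≤ N ^ 4 →
            Bnorm (T / (N : ℝ) ^ 5) (n * N) x ≤ 1 - 1 / (N : ℝ)} ≤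
          ENNReal.ofReal (c T) := by
  refine ⟨fun T => 2 / |T|, fun T => by positivity,
    tendsto_const_nhds.div_atTop tendsto_abs_atTop_atTop, fun T hT N hN => ?_⟩
  calc P _ ≤ P (stayedInDisc (T / (N : ℝ) ^ 5) (N ^ 5)) :=
        measure_mono (coarse_subset_stayedInDisc hT hN)
    _ = ENNReal.ofReal (P.real (stayedInDisc (T / (N : ℝ) ^ 5) (N ^ 5))) :=
        (ofReal_measureReal (measure_ne_top _ _)).symm
    _ ≤ ENNReal.ofReal (2 / |T|) := ENNReal.ofReal_le_ofReal
        (by rw [abs_of_pos hT]; exact measureReal_stayedInDisc_pow_five_le hT hN)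

end
end

section
/- Let ψ be real-valued, C^∞ on a neighborhood of the closed unit disc in ℝ² and harmonic on the open unit disc. Then lim_{T→∞} limsup_{N→∞} | E ψ(X_{n_ε}) − ψ(0,0) | = 0, where for each T and N the parameters are δ = T N^{−5}, ε = 1/N. -/
open MeasureTheory Filter
open scoped ENNReal MeasureTheory

noncomputable section

/-- The closed unit disc in `ℝ²`. -/
def closedDisc : Set (ℝ × ℝ) := {p | p.1 ^ 2 + p.2 ^ 2 ≤ 1}

/-- The open unit disc in `ℝ²`. -/
def openDisc : Set (ℝ × ℝ) := {p | p.1 ^ 2 + p.2 ^ 2 < 1}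

/-- First partial derivative `∂₁f`. -/
def pd1 {X : Type*} [NormedAddCommGroup X] [NormedSpace ℝ X]
    (f : ℝ × ℝ → X) (y : ℝ × ℝ) : X := fderiv ℝ f y (1, 0)

/-- Second partial derivative `∂₂f`. -/
def pd2 {X : Type*} [NormedAddCommGroup X] [NormedSpace ℝ X]
    (f : ℝ × ℝ → X) (y : ℝ × ℝ) : X := fderiv ℝ f y (0, 1)

/-- The discrete martingale transform `M^f_k = f(0,0) + Σ_{l=1}^k ∇f(B_{l-1})·dB_l`. -/
def Mf {X : Type*} [NormedAddCommGroup X] [NormedSpace ℝ X]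
    (f : ℝ × ℝ → X) (δ : ℝ) (k : ℕ) (x : ℝ) : X :=
  f (0, 0) + ∑ l ∈ Finset.Icc 1 k,
    (dB1 δ l x • pd1 f (Bpt δ (l - 1) x) + dB2 δ l x • pd2 f (Bpt δ (l - 1) x))

/-- The discrete martingale transform `M^g_k = Σ_{l=1}^k ∇g(B_{l-1})·dB_l`. -/
def Mg {X : Type*} [NormedAddCommGroup X] [NormedSpace ℝ X]
    (g : ℝ × ℝ → X) (δ : ℝ) (k : ℕ) (x : ℝ) : X :=
  ∑ l ∈ Finset.Icc 1 k,
    (dB1 δ l x • pd1 g (Bpt δ (l - 1) x) + dB2 δ l x • pd2 g (Bpt δ (l - 1) x))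


/-!
Expand `ψ` along the walk one fine step at a time. A step moves one coordinate by `± √(2δ)`,
the sign being a fresh Rademacher variable, while whether the walk was stopped before the
current block depends only on earlier signs. Hence in expectation the first-order Taylor term
vanishes and the remainder is `O(δ^{3/2})`. The second-order term is `δ ∂₁₁ψ` or `δ ∂₂₂ψ`
according to the previous sign; averaging over that sign gives `δ (∂₁₁ψ(p) + ∂₂₂ψ(q)) / 2`
with `|p - q| = O(√δ)`, which is `O(δ^{3/2})` by harmonicity. This fails only at the first
step of a block, where the stopping decision may depend on the previous sign, and there the
term is `O(δ)`. Over `N⁵` steps and `N⁴` blocks the error is `O(1/N)` for fixed `T`, so the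
limsup vanishes for every `T > 0`. Before stopping, the walk is within `1 - 1/N` of the origin
at the start of each block and moves less than `1/N` within it, so every expansion takes place
in the open disc.

Independence enters through the fact that a function of `ε₀, …, ε_{m-1}` is constant on the
dyadic intervals of generation `m`, so that its expectation is a finite average.
-/

namespace DyadicWalk

open scoped NNReal

/-! ### Dyadic averages -/

/-- `W` is a function of the signs `rad 0, …, rad (m - 1)`. -/
def DyadicMeasurable {α : Type*} (m : ℕ) (W : ℝ → α) : Prop :=
  ∀ x y : ℝ, ⌊(2 : ℝ) ^ m * x⌋ = ⌊(2 : ℝ) ^ m * y⌋ → W x = W y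

lemma floor_two_pow_mul_eq_div (m d : ℕ) (z : ℝ) :
    ⌊(2 : ℝ) ^ m * z⌋ = ⌊(2 : ℝ) ^ (m + d) * z⌋ / (2 ^ d : ℕ) := by
  rw [← Int.floor_div_natCast]
  congr 1
  push_cast
  field_simp
  ring

lemma floor_two_pow_mul_eq_of_le {m m' : ℕ} (h : m ≤ m') {x y : ℝ}
    (hxy : ⌊(2 : ℝ) ^ m' * x⌋ = ⌊(2 : ℝ) ^ m' * y⌋) :
    ⌊(2 : ℝ) ^ m * x⌋ = ⌊(2 : ℝ) ^ m * y⌋ := by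
  obtain ⟨d, rfl⟩ := Nat.exists_eq_add_of_le h
  rw [floor_two_pow_mul_eq_div m d x, floor_two_pow_mul_eq_div m d y, hxy]

lemma floor_two_pow_mul_eq {m j : ℕ} {x : ℝ}
    (hx : x ∈ Set.Ico ((j : ℝ) / 2 ^ m) ((j + 1 : ℕ) / 2 ^ m)) : ⌊(2 : ℝ) ^ m * x⌋ = j := by
  have h2 : (0 : ℝ) < 2 ^ m := by positivity
  obtain ⟨h1, h3⟩ := hx
  rw [div_le_iff₀ h2] at h1
  rw [lt_div_iff₀ h2] at h3
  rw [Int.floor_eq_iff]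
  push_cast at h3 ⊢
  constructor <;> linarith

lemma Ico_zero_one_eq_biUnion (m : ℕ) :
    Set.Ico (0 : ℝ) 1
      = ⋃ j ∈ Finset.range (2 ^ m), Set.Ico ((j : ℝ) / 2 ^ m) ((j + 1 : ℕ) / 2 ^ m) := by
  apply subset_antisymm
  · simpa using Ico_subset_biUnion_Ico (2 ^ m) (fun j : ℕ => (j : ℝ) / 2 ^ m)
  · simp only [Set.iUnion_subset_iff, Finset.mem_range]
    intro j hj
    apply Set.Ico_subset_Ico (by positivity)
    rw [div_le_one (by positivity)]
    exact_mod_cast hj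

namespace DyadicMeasurable

variable {α : Type*} {m m' : ℕ} {W : ℝ → α}

lemma mono (hW : DyadicMeasurable m W) (h : m ≤ m') : DyadicMeasurable m' W :=
  fun x y hxy => hW x y (floor_two_pow_mul_eq_of_le h hxy)

lemma eqOn_Ico (hW : DyadicMeasurable m W) (j : ℕ) :
    Set.EqOn W (fun _ => W (j / 2 ^ m)) (Set.Ico ((j : ℝ) / 2 ^ m) ((j + 1 : ℕ) / 2 ^ m)) := by
  intro x hx
  apply hW
  rw [floor_two_pow_mul_eq hx, floor_two_pow_mul_eq ⟨le_rfl, by push_cast; gcongr; linarith⟩]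

lemma integrableOn_Ico {W : ℝ → ℝ} (hW : DyadicMeasurable m W) (j : ℕ) :
    IntegrableOn W (Set.Ico ((j : ℝ) / 2 ^ m) ((j + 1 : ℕ) / 2 ^ m)) :=
  (integrableOn_const (by simp)).congr_fun (hW.eqOn_Ico j).symm measurableSet_Ico

lemma integrable {W : ℝ → ℝ} (hW : DyadicMeasurable m W) : Integrable W P := by
  rw [P, ← IntegrableOn, Ico_zero_one_eq_biUnion m, integrableOn_finset_iUnion]
  exact fun j _ => hW.integrableOn_Ico j

lemma integral_eq_sum {W : ℝ → ℝ} (hW : DyadicMeasurable m W) :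
    ∫ x, W x ∂P = ∑ j ∈ Finset.range (2 ^ m), W (j / 2 ^ m) / 2 ^ m := by
  have hmono : Monotone fun j : ℕ => (j : ℝ) / 2 ^ m := fun i j h => by dsimp only; gcongr
  rw [P, Ico_zero_one_eq_biUnion m, integral_biUnion_finset _ (fun _ _ => measurableSet_Ico)
    (by simpa using hmono.pairwise_disjoint_on_Ico_succ.set_pairwise _)
    (fun j _ => hW.integrableOn_Ico j)]
  refine Finset.sum_congr rfl fun j _ => ?_
  rw [setIntegral_congr_fun measurableSet_Ico (hW.eqOn_Ico j), setIntegral_const,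
    measureReal_def, Real.volume_Ico, ENNReal.toReal_ofReal (sub_nonneg.2 (by gcongr; simp)),
    smul_eq_mul]
  push_cast
  ring

end DyadicMeasurable

instance : IsProbabilityMeasure P :=
  ⟨by simp [P, Measure.restrict_apply, Real.volume_Ico]⟩

lemma abs_integral_le_of_forall_abs_le {f : ℝ → ℝ} {C : ℝ} (h : ∀ x, |f x| ≤ C) :
    |∫ x, f x ∂P| ≤ C := by
  simpa using norm_integral_le_of_norm_le_const (μ := P)
    (ae_of_all _ fun x => (Real.norm_eq_abs _).trans_le (h x))

lemma abs_mul_le_of_abs_le_one {a b C : ℝ} (ha : |a| ≤ 1) (hC : 0 ≤ C) (hb : a ≠ 0 → |b| ≤ C) :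
    |a * b| ≤ C := by
  rcases eq_or_ne a 0 with h | h
  · simpa [h] using hC
  · rw [abs_mul]
    exact (mul_le_mul ha (hb h) (abs_nonneg _) zero_le_one).trans_eq (one_mul _)

/-! ### Rademacher signs -/

lemma rad_eq_one_or_neg_one (k : ℕ) (x : ℝ) : rad k x = 1 ∨ rad k x = -1 := by
  unfold rad
  split_ifs <;> simp

lemma rad_mul_self (k : ℕ) (x : ℝ) : rad k x * rad k x = 1 := by
  rcases rad_eq_one_or_neg_one k x with h | h <;> simp [h]

lemma abs_rad (k : ℕ) (x : ℝ) : |rad k x| = 1 := by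
  rcases rad_eq_one_or_neg_one k x with h | h <;> simp [h]

lemma dyadicMeasurable_rad (k : ℕ) : DyadicMeasurable (k + 1) (rad k) :=
  fun x y h => by simp only [rad, h]

lemma DyadicMeasurable.mul_rad {k : ℕ} {G : ℝ → ℝ} (hG : DyadicMeasurable k G) :
    DyadicMeasurable (k + 1) fun x => G x * rad k x :=
  fun x y h => by simp only [hG.mono k.le_succ x y h, dyadicMeasurable_rad k x y h]

lemma rad_natCast_div (k j : ℕ) :
    rad k ((j : ℝ) / 2 ^ (k + 1)) = if Odd j then 1 else -1 := by
  have h : (2 : ℝ) ^ (k + 1) * ((j : ℝ) / 2 ^ (k + 1)) = j := mul_div_cancel₀ _ (by positivity)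
  simp only [rad, h, Int.floor_natCast, Int.odd_coe_nat]

lemma sum_range_two_mul (n : ℕ) (f : ℕ → ℝ) :
    ∑ j ∈ Finset.range (2 * n), f j = ∑ i ∈ Finset.range n, (f (2 * i) + f (2 * i + 1)) := by
  induction n with
  | zero => simp
  | succ n ih => rw [mul_add_one, Finset.sum_range_succ, Finset.sum_range_succ,
      Finset.sum_range_succ, ih, add_assoc]

lemma integral_mul_rad {k : ℕ} {G : ℝ → ℝ} (hG : DyadicMeasurable k G) :
    ∫ x, G x * rad k x ∂P = 0 := by
  rw [hG.mul_rad.integral_eq_sum, pow_succ', sum_range_two_mul]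
  refine Finset.sum_eq_zero fun i _ => ?_
  have hpair : G ((2 * i : ℕ) / 2 ^ (k + 1)) = G ((2 * i + 1 : ℕ) / 2 ^ (k + 1)) := by
    apply hG
    rw [floor_two_pow_mul_eq_div k 1, floor_two_pow_mul_eq_div k 1]
    simp only [mul_div_cancel₀ _ (show (2 : ℝ) ^ (k + 1) ≠ 0 by positivity), Int.floor_natCast]
    omega
  simp only [rad_natCast_div, hpair, Nat.not_odd_iff_even.2 (even_two_mul i),
    odd_two_mul_add_one i, if_true, if_false]
  ring

lemma integral_ite_rad {k : ℕ} {G₁ G₂ : ℝ → ℝ} (h₁ : DyadicMeasurable k G₁)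
    (h₂ : DyadicMeasurable k G₂) :
    ∫ x, (if rad k x = -1 then G₁ x else G₂ x) ∂P = (∫ x, G₁ x ∂P + ∫ x, G₂ x ∂P) / 2 := by
  have hmean : DyadicMeasurable k fun x => (G₁ x + G₂ x) / 2 :=
    fun x y h => by simp only [h₁ x y h, h₂ x y h]
  have hdiff : DyadicMeasurable k fun x => (G₂ x - G₁ x) / 2 :=
    fun x y h => by simp only [h₁ x y h, h₂ x y h]
  have hsplit : ∀ x, (if rad k x = -1 then G₁ x else G₂ x)
      = (G₁ x + G₂ x) / 2 + (G₂ x - G₁ x) / 2 * rad k x := fun x => by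
    rcases rad_eq_one_or_neg_one k x with h | h <;> norm_num [h] <;> ring
  simp only [hsplit]
  rw [integral_add hmean.integrable hdiff.mul_rad.integrable, integral_mul_rad hdiff, add_zero,
    integral_div, integral_add h₁.integrable h₂.integrable]

/-! ### The walk and the stopping index -/

/-- The coordinate axis along which the walk moves at step `k + 1`. -/
def axisDir (k : ℕ) (x : ℝ) : ℝ × ℝ := if rad k x = -1 then (1, 0) else (0, 1)

def axes : Set (ℝ × ℝ) := {(1, 0), (0, 1)}

lemma axisDir_mem_axes (k : ℕ) (x : ℝ) : axisDir k x ∈ axes := by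
  unfold axisDir axes
  split_ifs <;> simp

lemma dyadicMeasurable_axisDir (k : ℕ) : DyadicMeasurable (k + 1) (axisDir k) :=
  fun x y h => by simp only [axisDir, dyadicMeasurable_rad k x y h]

lemma norm_smul_axisDir (t : ℝ) (k : ℕ) (x : ℝ) : ‖t • axisDir k x‖ = |t| := by
  unfold axisDir
  split_ifs <;> simp [Prod.norm_def]

lemma Bpt_zero (δ x : ℝ) : Bpt δ 0 x = 0 := by
  simp [Bpt, B1, B2]

lemma Bpt_succ (δ : ℝ) (k : ℕ) (x : ℝ) :
    Bpt δ (k + 1) x = Bpt δ k x + (rad (k + 1) x * √(2 * δ)) • axisDir k x := by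
  simp only [Bpt, B1, B2, Finset.sum_Icc_succ_top (Nat.le_add_left 1 k), dB1, dB2, axisDir,
    Nat.add_sub_cancel]
  rcases rad_eq_one_or_neg_one k x with h | h <;> norm_num [h]

lemma dyadicMeasurable_Bpt (δ : ℝ) (k : ℕ) : DyadicMeasurable (k + 1) (Bpt δ k) := by
  induction k with
  | zero => exact fun x y _ => by rw [Bpt_zero, Bpt_zero]
  | succ k ih =>
    intro x y h
    rw [Bpt_succ, Bpt_succ, ih.mono (k + 1).le_succ x y h, dyadicMeasurable_rad (k + 1) x y h,
      (dyadicMeasurable_axisDir k).mono (k + 1).le_succ x y h]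

/-- The Euclidean norm on `ℝ²`; the norm of `ℝ × ℝ` is the sup norm. -/
def euclNorm (p : ℝ × ℝ) : ℝ := √(p.1 ^ 2 + p.2 ^ 2)

lemma euclNorm_eq_norm_toLp (p : ℝ × ℝ) : euclNorm p = ‖WithLp.toLp 2 p‖ := by
  simp [euclNorm, WithLp.prod_norm_eq_of_L2]

lemma euclNorm_add_le (p q : ℝ × ℝ) : euclNorm (p + q) ≤ euclNorm p + euclNorm q := by
  simpa only [euclNorm_eq_norm_toLp, WithLp.toLp_add] using norm_add_le _ _

lemma euclNorm_smul_axisDir (t : ℝ) (k : ℕ) (x : ℝ) : euclNorm (t • axisDir k x) = |t| := by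
  unfold euclNorm axisDir
  split_ifs <;> simp [Real.sqrt_sq_eq_abs]

lemma euclNorm_add_smul_axisDir_le (p : ℝ × ℝ) (t : ℝ) (k : ℕ) (x : ℝ) :
    euclNorm (p + t • axisDir k x) ≤ euclNorm p + |t| :=
  (euclNorm_add_le _ _).trans_eq (by rw [euclNorm_smul_axisDir])

lemma mem_openDisc_of_euclNorm_lt {p : ℝ × ℝ} (h : euclNorm p < 1) : p ∈ openDisc := by
  simpa [euclNorm, openDisc, Real.sqrt_lt'] using h

lemma add_smul_axisDir_mem_openDisc {p : ℝ × ℝ} {t r : ℝ} (h : euclNorm p + r < 1)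
    (ht : |t| ≤ r) (k : ℕ) (x : ℝ) : p + t • axisDir k x ∈ openDisc :=
  mem_openDisc_of_euclNorm_lt ((euclNorm_add_smul_axisDir_le p t k x).trans_lt (by linarith))

lemma Bnorm_eq_euclNorm (δ : ℝ) (k : ℕ) (x : ℝ) : Bnorm δ k x = euclNorm (Bpt δ k x) := rfl

lemma dyadicMeasurable_Bnorm (δ : ℝ) (k : ℕ) : DyadicMeasurable (k + 1) (Bnorm δ k) :=
  fun x y h => congrArg euclNorm (dyadicMeasurable_Bpt δ k x y h)

lemma Bnorm_add_le (δ : ℝ) (k j : ℕ) (x : ℝ) :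
    Bnorm δ (k + j) x ≤ Bnorm δ k x + j * √(2 * δ) := by
  induction j with
  | zero => simp
  | succ j ih =>
    rw [← add_assoc, Bnorm_eq_euclNorm, Bpt_succ]
    refine (euclNorm_add_smul_axisDir_le _ _ _ _).trans ?_
    rw [abs_mul, abs_rad, one_mul, abs_of_nonneg (Real.sqrt_nonneg _)]
    push_cast
    linarith [ih, Bnorm_eq_euclNorm δ (k + j) x]

lemma nstop_le (δ ε : ℝ) (N : ℕ) (x : ℝ) : nstop δ ε N x ≤ N ^ 4 :=
  Nat.sInf_le (Set.mem_insert _ _)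

lemma Bnorm_mul_le_of_lt_nstop {δ ε : ℝ} {N n : ℕ} {x : ℝ} (hε : ε ≤ 1)
    (hn : n < nstop δ ε N x) : Bnorm δ (n * N) x ≤ 1 - ε := by
  rcases Nat.eq_zero_or_pos n with rfl | hpos
  · simp [Bnorm_eq_euclNorm, Bpt_zero, euclNorm, hε]
  by_contra! h
  have : nstop δ ε N x ≤ n :=
    Nat.sInf_le (Set.mem_insert_of_mem _ ⟨hpos, (hn.trans_le (nstop_le δ ε N x)).le, h⟩)
  omega

lemma Bnorm_add_sqrt_lt_one {δ ε : ℝ} {N n j : ℕ} {x : ℝ} (hε : ε ≤ 1)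
    (hNs : N * √(2 * δ) < ε) (hn : n < nstop δ ε N x) (hj : j < N) :
    Bnorm δ (n * N + j) x + √(2 * δ) < 1 := by
  have hj' : (j + 1 : ℝ) * √(2 * δ) ≤ N * √(2 * δ) :=
    mul_le_mul_of_nonneg_right (by exact_mod_cast hj) (Real.sqrt_nonneg _)
  linarith [Bnorm_add_le δ (n * N) j x, Bnorm_mul_le_of_lt_nstop hε hn]

lemma lt_nstop_iff {δ ε : ℝ} {N n : ℕ} {x : ℝ} (hn : n < N ^ 4) :
    n < nstop δ ε N x ↔ ∀ m ∈ Finset.Icc 1 n, Bnorm δ (m * N) x ≤ 1 - ε := by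
  refine ⟨fun h m hm => ?_, fun h => ?_⟩
  · rw [Finset.mem_Icc] at hm
    by_contra! h'
    have : nstop δ ε N x ≤ m := Nat.sInf_le (Set.mem_insert_of_mem _ ⟨hm.1, by omega, h'⟩)
    omega
  · by_contra! h'
    have hmem : nstop δ ε N x ∈ insert (N ^ 4)
        {n | 1 ≤ n ∧ n ≤ N ^ 4 ∧ 1 - ε < Bnorm δ (n * N) x} :=
      Nat.sInf_mem ⟨_, Set.mem_insert _ _⟩
    rcases hmem with h0 | ⟨h1, -, h2⟩
    · omega
    · linarith [h _ (Finset.mem_Icc.2 ⟨h1, h'⟩)]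

lemma dyadicMeasurable_lt_nstop (δ ε : ℝ) {N n : ℕ} (hn : n < N ^ 4) :
    DyadicMeasurable (n * N + 1) fun x => n < nstop δ ε N x := by
  intro x y h
  dsimp only
  rw [eq_iff_iff, lt_nstop_iff hn, lt_nstop_iff hn]
  refine forall₂_congr fun m hm => ?_
  have hmn : m * N + 1 ≤ n * N + 1 := by
    gcongr
    exact (Finset.mem_Icc.1 hm).2
  rw [(dyadicMeasurable_Bnorm δ (m * N)).mono hmn x y h]

def stopWeight (δ ε : ℝ) (N n : ℕ) (x : ℝ) : ℝ := if n < nstop δ ε N x then 1 else 0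

lemma abs_stopWeight_le (δ ε : ℝ) (N n : ℕ) (x : ℝ) : |stopWeight δ ε N n x| ≤ 1 := by
  unfold stopWeight
  split_ifs <;> simp

lemma lt_nstop_of_stopWeight_ne_zero {δ ε : ℝ} {N n : ℕ} {x : ℝ}
    (h : stopWeight δ ε N n x ≠ 0) : n < nstop δ ε N x := by
  by_contra h'
  exact h (if_neg h')

lemma dyadicMeasurable_stopWeight (δ ε : ℝ) {N n : ℕ} (hn : n < N ^ 4) :
    DyadicMeasurable (n * N + 1) (stopWeight δ ε N n) := fun x y h => by
  have := dyadicMeasurable_lt_nstop δ ε hn x y h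
  simp only at this
  simp only [stopWeight, this]

lemma sum_stopWeight_mul_sub (u : ℕ → ℝ) (δ ε : ℝ) (N : ℕ) (x : ℝ) :
    ∑ n ∈ Finset.range (N ^ 4), ∑ j ∈ Finset.range N,
      stopWeight δ ε N n x * (u (n * N + j + 1) - u (n * N + j))
      = u (nstop δ ε N x * N) - u 0 := by
  have hblock (n : ℕ) : ∑ j ∈ Finset.range N, (u (n * N + j + 1) - u (n * N + j))
      = u ((n + 1) * N) - u (n * N) := by
    simpa [add_assoc, add_mul] using Finset.sum_range_sub (fun j => u (n * N + j)) N
  have hrange : (Finset.range (N ^ 4)).filter (· < nstop δ ε N x)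
      = Finset.range (nstop δ ε N x) := by
    ext n
    simp only [Finset.mem_filter, Finset.mem_range]
    have := nstop_le δ ε N x
    omega
  simp only [← Finset.mul_sum, hblock]
  simp only [stopWeight, ite_mul, one_mul, zero_mul]
  rw [← Finset.sum_filter, hrange, Finset.sum_range_sub (fun n => u (n * N)), zero_mul]

/-! ### Calculus on the disc -/

lemma convex_closedDisc : Convex ℝ closedDisc := by
  have hsq (f : ℝ × ℝ →ₗ[ℝ] ℝ) : ConvexOn ℝ Set.univ fun p => f p ^ 2 :=
    (even_two.convexOn_pow (𝕜 := ℝ)).comp_linearMap f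
  convert ((hsq (LinearMap.fst ℝ ℝ ℝ)).add (hsq (LinearMap.snd ℝ ℝ ℝ))).convex_le 1
  simp [closedDisc]

lemma isCompact_closedDisc : IsCompact closedDisc := by
  refine Metric.isCompact_of_isClosed_isBounded (isClosed_le (by fun_prop) continuous_const)
    ((Metric.isBounded_closedBall (x := 0) (r := 1)).subset fun p hp => ?_)
  have hp : p.1 ^ 2 + p.2 ^ 2 ≤ 1 := hp
  rw [mem_closedBall_zero_iff, Prod.norm_def, max_le_iff, Real.norm_eq_abs, Real.norm_eq_abs,
    ← sq_le_one_iff_abs_le_one, ← sq_le_one_iff_abs_le_one]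
  constructor <;> nlinarith [sq_nonneg p.1, sq_nonneg p.2]

lemma isOpen_openDisc : IsOpen openDisc :=
  isOpen_lt (by fun_prop) continuous_const

lemma openDisc_subset_closedDisc : openDisc ⊆ closedDisc :=
  fun p (hp : p.1 ^ 2 + p.2 ^ 2 < 1) => show p.1 ^ 2 + p.2 ^ 2 ≤ 1 from hp.le

/-- Equal to `pd1 (pd1 f)` for `e = (1, 0)` and to `pd2 (pd2 f)` for `e = (0, 1)`, by `rfl`. -/
def deriv2Along (f : ℝ × ℝ → ℝ) (e y : ℝ × ℝ) : ℝ := fderiv ℝ (fun z => fderiv ℝ f z e) y e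

lemma contDiffOn_fderiv_apply {U : Set (ℝ × ℝ)} (hU : IsOpen U) {f : ℝ × ℝ → ℝ}
    (hf : ContDiffOn ℝ (⊤ : ℕ∞) f U) (e : ℝ × ℝ) :
    ContDiffOn ℝ (⊤ : ℕ∞) (fun y => fderiv ℝ f y e) U :=
  (hf.fderiv_of_isOpen hU (by exact_mod_cast le_top)).clm_apply contDiffOn_const

lemma contDiffOn_deriv2Along {U : Set (ℝ × ℝ)} (hU : IsOpen U) {f : ℝ × ℝ → ℝ}
    (hf : ContDiffOn ℝ (⊤ : ℕ∞) f U) (e : ℝ × ℝ) :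
    ContDiffOn ℝ (⊤ : ℕ∞) (deriv2Along f e) U :=
  contDiffOn_fderiv_apply hU (contDiffOn_fderiv_apply hU hf e) e

lemma exists_bound_lipschitzOnWith_deriv2Along {ψ : ℝ × ℝ → ℝ} {U : Set (ℝ × ℝ)}
    (hU : IsOpen U) (hUD : closedDisc ⊆ U) (hψ : ContDiffOn ℝ (⊤ : ℕ∞) ψ U) :
    ∃ (M : ℝ) (K : ℝ≥0), (∀ e ∈ axes, ∀ y ∈ openDisc, |deriv2Along ψ e y| ≤ M) ∧
      ∀ e ∈ axes, LipschitzOnWith K (deriv2Along ψ e) openDisc := by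
  have h (e : ℝ × ℝ) : ∃ (M : ℝ) (K : ℝ≥0), (∀ y ∈ closedDisc, |deriv2Along ψ e y| ≤ M) ∧
      LipschitzOnWith K (deriv2Along ψ e) closedDisc := by
    have hc := (contDiffOn_deriv2Along hU hψ e).mono hUD
    obtain ⟨M, hM⟩ := isCompact_closedDisc.exists_bound_of_continuousOn hc.continuousOn
    obtain ⟨K, hK⟩ := hc.exists_lipschitzOnWith (by simp) convex_closedDisc isCompact_closedDisc
    exact ⟨M, K, fun y hy => (Real.norm_eq_abs _).symm.trans_le (hM y hy), hK⟩
  obtain ⟨M₁, K₁, hM₁, hK₁⟩ := h (1, 0)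
  obtain ⟨M₂, K₂, hM₂, hK₂⟩ := h (0, 1)
  refine ⟨max M₁ M₂, max K₁ K₂, ?_, ?_⟩
  · rintro e (rfl | rfl) y hy
    · exact (hM₁ y (openDisc_subset_closedDisc hy)).trans (le_max_left _ _)
    · exact (hM₂ y (openDisc_subset_closedDisc hy)).trans (le_max_right _ _)
  · rintro e (rfl | rfl)
    · exact (hK₁.weaken (le_max_left _ _)).mono openDisc_subset_closedDisc
    · exact (hK₂.weaken (le_max_right _ _)).mono openDisc_subset_closedDisc

lemma abs_taylor_two_le {f f' f'' : ℝ → ℝ} {s C : ℝ} (hC : 0 ≤ C)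
    (hf : ∀ t ∈ Set.uIcc 0 s, HasDerivAt f (f' t) t)
    (hf' : ∀ t ∈ Set.uIcc 0 s, HasDerivAt f' (f'' t) t)
    (hf'' : ∀ t ∈ Set.uIcc 0 s, |f'' t - f'' 0| ≤ C * |t|) :
    |f s - f 0 - s * f' 0 - s ^ 2 / 2 * f'' 0| ≤ C * |s| ^ 3 := by
  have habs : ∀ t ∈ Set.uIcc 0 s, |t| ≤ |s| := fun t ht => by
    simpa using Set.abs_sub_left_of_mem_uIcc ht
  have hg : ∀ t ∈ Set.uIcc 0 s, |f' t - f' 0 - t * f'' 0| ≤ C * |s| * |t| := fun t ht => by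
    have := (convex_uIcc 0 s).norm_image_sub_le_of_norm_hasDerivWithin_le
      (f := fun u => f' u - u * f'' 0) (C := C * |s|)
      (fun u hu => ((hf' u hu).sub (hasDerivAt_mul_const _)).hasDerivWithinAt)
      (fun u hu => (hf'' u hu).trans (mul_le_mul_of_nonneg_left (habs u hu) hC))
      Set.left_mem_uIcc ht
    simpa [sub_right_comm] using this
  have := (convex_uIcc 0 s).norm_image_sub_le_of_norm_hasDerivWithin_le
    (f := fun u => f u - u * f' 0 - u ^ 2 / 2 * f'' 0) (C := C * |s| * |s|)
    (fun u hu => (((hf u hu).sub (hasDerivAt_mul_const _)).sub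
      (by simpa using ((hasDerivAt_pow 2 u).div_const 2).mul_const (f'' 0))).hasDerivWithinAt)
    (fun u hu => (hg u hu).trans (mul_le_mul_of_nonneg_left (habs u hu) (by positivity)))
    Set.left_mem_uIcc Set.right_mem_uIcc
  calc _ = ‖(f s - s * f' 0 - s ^ 2 / 2 * f'' 0) - (f 0 - 0 * f' 0 - 0 ^ 2 / 2 * f'' 0)‖ := by
        rw [Real.norm_eq_abs]
        ring_nf
    _ ≤ C * |s| * |s| * ‖s - 0‖ := this
    _ = C * |s| ^ 3 := by
        rw [sub_zero, Real.norm_eq_abs]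
        ring

lemma hasDerivAt_comp_add_smul {g : ℝ × ℝ → ℝ} {b e : ℝ × ℝ} {t : ℝ}
    (hg : DifferentiableAt ℝ g (b + t • e)) :
    HasDerivAt (fun u => g (b + u • e)) (fderiv ℝ g (b + t • e) e) t :=
  hg.hasFDerivAt.comp_hasDerivAt t (by simpa using ((hasDerivAt_id t).smul_const e).const_add b)

lemma abs_taylor_two_along_le {U : Set (ℝ × ℝ)} (hU : IsOpen U) {ψ : ℝ × ℝ → ℝ}
    (hψ : ContDiffOn ℝ (⊤ : ℕ∞) ψ U) {b e : ℝ × ℝ} {s C : ℝ} (hC : 0 ≤ C)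
    (hseg : ∀ t ∈ Set.uIcc 0 s, b + t • e ∈ U)
    (hlip : ∀ t ∈ Set.uIcc 0 s, |deriv2Along ψ e (b + t • e) - deriv2Along ψ e b| ≤ C * |t|) :
    |ψ (b + s • e) - ψ b - s * fderiv ℝ ψ b e - s ^ 2 / 2 * deriv2Along ψ e b|
      ≤ C * |s| ^ 3 := by
  have hdiff {g : ℝ × ℝ → ℝ} (hg : ContDiffOn ℝ (⊤ : ℕ∞) g U) {t : ℝ}
      (ht : t ∈ Set.uIcc 0 s) : DifferentiableAt ℝ g (b + t • e) :=
    (hg.differentiableOn (by simp)).differentiableAt (hU.mem_nhds (hseg t ht))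
  simpa using abs_taylor_two_le (f := fun u => ψ (b + u • e))
    (f' := fun u => fderiv ℝ ψ (b + u • e) e) (f'' := fun u => deriv2Along ψ e (b + u • e)) hC
    (fun t ht => hasDerivAt_comp_add_smul (hdiff hψ ht))
    (fun t ht => hasDerivAt_comp_add_smul (hdiff (contDiffOn_fderiv_apply hU hψ e) ht))
    (fun t ht => by simpa using hlip t ht)

lemma abs_sub_le_of_lipschitzOnWith {g : ℝ × ℝ → ℝ} {K : ℝ≥0} {S : Set (ℝ × ℝ)}
    (hg : LipschitzOnWith K g S) {p q : ℝ × ℝ} (hp : p ∈ S) (hq : q ∈ S) :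
    |g p - g q| ≤ K * ‖p - q‖ := by
  simpa [Real.dist_eq, dist_eq_norm] using hg.dist_le_mul p hp q hq

lemma abs_deriv2Along_add_deriv2Along_le {ψ : ℝ × ℝ → ℝ} {K : ℝ≥0}
    (hharm : ∀ y ∈ openDisc, deriv2Along ψ (1, 0) y + deriv2Along ψ (0, 1) y = 0)
    (hK : LipschitzOnWith K (deriv2Along ψ (0, 1)) openDisc) {p : ℝ × ℝ} {s : ℝ} (hs : 0 ≤ s)
    {k : ℕ} {x : ℝ} (hm : p + (-s) • axisDir k x ∈ openDisc)
    (hp : p + s • axisDir k x ∈ openDisc) :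
    |deriv2Along ψ (1, 0) (p + (-s) • axisDir k x) + deriv2Along ψ (0, 1) (p + s • axisDir k x)|
      ≤ 2 * (K * s) := by
  have hdiff := abs_sub_le_of_lipschitzOnWith hK hp hm
  rw [add_sub_add_left_eq_sub, ← sub_smul, sub_neg_eq_add, norm_smul_axisDir,
    abs_of_nonneg (add_nonneg hs hs)] at hdiff
  calc _ = |deriv2Along ψ (0, 1) (p + s • axisDir k x)
        - deriv2Along ψ (0, 1) (p + (-s) • axisDir k x)| := by
        congr 1
        linear_combination hharm _ hm
    _ ≤ 2 * (K * s) := hdiff.trans_eq (by ring)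

/-! ### One step of the walk -/

lemma dyadicMeasurable_mul_increment (ψ : ℝ × ℝ → ℝ) (δ : ℝ) {χ : ℝ → ℝ} {k : ℕ}
    (hχ : DyadicMeasurable (k + 1) χ) :
    DyadicMeasurable (k + 2) fun x => χ x * (ψ (Bpt δ (k + 1) x) - ψ (Bpt δ k x)) :=
  fun x y h => by
    simp only [hχ.mono k.succ.le_succ x y h, dyadicMeasurable_Bpt δ (k + 1) x y h,
      (dyadicMeasurable_Bpt δ k).mono k.succ.le_succ x y h]

section Step

variable {ψ : ℝ × ℝ → ℝ} {δ M : ℝ} {K : ℝ≥0} {χ : ℝ → ℝ} {k : ℕ}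

lemma abs_taylor_step_le (hψ : ContDiffOn ℝ (⊤ : ℕ∞) ψ openDisc)
    (hK : ∀ e ∈ axes, LipschitzOnWith K (deriv2Along ψ e) openDisc) (hδ : 0 ≤ δ) {x : ℝ}
    (hin : Bnorm δ k x + √(2 * δ) < 1) :
    |ψ (Bpt δ (k + 1) x) - ψ (Bpt δ k x)
      - rad (k + 1) x * √(2 * δ) * fderiv ℝ ψ (Bpt δ k x) (axisDir k x)
      - δ * deriv2Along ψ (axisDir k x) (Bpt δ k x)| ≤ K * √(2 * δ) ^ 3 := by
  set t := rad (k + 1) x * √(2 * δ)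
  have ht : |t| = √(2 * δ) := by
    rw [abs_mul, abs_rad, one_mul, abs_of_nonneg (Real.sqrt_nonneg _)]
  have ht2 : t ^ 2 / 2 = δ := by
    rw [mul_pow, sq (rad _ _), rad_mul_self, one_mul, Real.sq_sqrt (by positivity)]
    ring
  have hstep : Bpt δ (k + 1) x = Bpt δ k x + t • axisDir k x := Bpt_succ δ k x
  have hseg : ∀ u ∈ Set.uIcc 0 t, Bpt δ k x + u • axisDir k x ∈ openDisc := fun u hu =>
    add_smul_axisDir_mem_openDisc hin
      ((by simpa using Set.abs_sub_left_of_mem_uIcc hu : |u| ≤ |t|).trans ht.le) k x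
  have hb : Bpt δ k x ∈ openDisc := by simpa using hseg 0 Set.left_mem_uIcc
  have := abs_taylor_two_along_le isOpen_openDisc hψ K.2 hseg fun u hu => by
    simpa [norm_smul_axisDir] using
      abs_sub_le_of_lipschitzOnWith (hK _ (axisDir_mem_axes k x)) (hseg u hu) hb
  rwa [ht2, ht, ← hstep] at this

/-- The first-order term is killed by the fresh sign `rad (k + 1)`. -/
lemma abs_integral_mul_increment_sub_le (hψ : ContDiffOn ℝ (⊤ : ℕ∞) ψ openDisc)
    (hK : ∀ e ∈ axes, LipschitzOnWith K (deriv2Along ψ e) openDisc) (hδ : 0 ≤ δ)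
    (hχ : DyadicMeasurable (k + 1) χ) (hχ1 : ∀ x, |χ x| ≤ 1)
    (hin : ∀ x, χ x ≠ 0 → Bnorm δ k x + √(2 * δ) < 1) :
    |∫ x, χ x * (ψ (Bpt δ (k + 1) x) - ψ (Bpt δ k x)) ∂P
      - δ * ∫ x, χ x * deriv2Along ψ (axisDir k x) (Bpt δ k x) ∂P| ≤ K * √(2 * δ) ^ 3 := by
  set R : ℝ → ℝ := fun x => ψ (Bpt δ (k + 1) x) - ψ (Bpt δ k x)
    - rad (k + 1) x * √(2 * δ) * fderiv ℝ ψ (Bpt δ k x) (axisDir k x)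
    - δ * deriv2Along ψ (axisDir k x) (Bpt δ k x)
  set G : ℝ → ℝ := fun x => χ x * (√(2 * δ) * fderiv ℝ ψ (Bpt δ k x) (axisDir k x))
  set H : ℝ → ℝ := fun x => χ x * deriv2Along ψ (axisDir k x) (Bpt δ k x)
  have hG : DyadicMeasurable (k + 1) G := fun x y h => by
    simp only [G, hχ x y h, dyadicMeasurable_Bpt δ k x y h, dyadicMeasurable_axisDir k x y h]
  have hH : DyadicMeasurable (k + 1) H := fun x y h => by
    simp only [H, hχ x y h, dyadicMeasurable_Bpt δ k x y h, dyadicMeasurable_axisDir k x y h]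
  have hsplit : ∀ x, χ x * (ψ (Bpt δ (k + 1) x) - ψ (Bpt δ k x))
      = (G x * rad (k + 1) x + δ * H x) + χ x * R x := fun x => by
    simp only [G, H, R]
    ring
  have hGH : Integrable (fun x => G x * rad (k + 1) x + δ * H x) P :=
    hG.mul_rad.integrable.add (hH.integrable.const_mul δ)
  have hχR : Integrable (fun x => χ x * R x) P :=
    ((dyadicMeasurable_mul_increment ψ δ hχ).integrable.sub hGH).congr
      (ae_of_all _ fun x => by simp [hsplit x])
  rw [integral_congr_ae (ae_of_all _ hsplit), integral_add hGH hχR,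
    integral_add hG.mul_rad.integrable (hH.integrable.const_mul δ), integral_mul_rad hG,
    integral_const_mul, zero_add, add_sub_cancel_left]
  exact abs_integral_le_of_forall_abs_le fun x =>
    abs_mul_le_of_abs_le_one (hχ1 x) (by positivity) fun hx =>
      abs_taylor_step_le hψ hK hδ (hin x hx)

lemma abs_integral_mul_deriv2Along_le
    (hM : ∀ e ∈ axes, ∀ y ∈ openDisc, |deriv2Along ψ e y| ≤ M)
    (hχ1 : ∀ x, |χ x| ≤ 1) (hin : ∀ x, χ x ≠ 0 → Bnorm δ k x < 1) :
    |∫ x, χ x * deriv2Along ψ (axisDir k x) (Bpt δ k x) ∂P| ≤ M := by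
  have hM0 : 0 ≤ M := (abs_nonneg _).trans (hM (1, 0) (by simp [axes]) 0 (by simp [openDisc]))
  exact abs_integral_le_of_forall_abs_le fun x => abs_mul_le_of_abs_le_one (hχ1 x) hM0 fun hx =>
    hM _ (axisDir_mem_axes k x) _ (mem_openDisc_of_euclNorm_lt (p := Bpt δ k x) (hin x hx))

/-- The sign `rad (k + 1)` both moves the walk back or forth along `axisDir k` and selects the
next axis; averaging over it pairs `∂₁₁ψ (B_k - √(2δ) d)` with `∂₂₂ψ (B_k + √(2δ) d)`,
where `d = axisDir k`. -/
lemma abs_integral_mul_deriv2Along_succ_le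
    (hharm : ∀ y ∈ openDisc, deriv2Along ψ (1, 0) y + deriv2Along ψ (0, 1) y = 0)
    (hK : LipschitzOnWith K (deriv2Along ψ (0, 1)) openDisc)
    (hχ : DyadicMeasurable (k + 1) χ) (hχ1 : ∀ x, |χ x| ≤ 1)
    (hin : ∀ x, χ x ≠ 0 → Bnorm δ k x + √(2 * δ) < 1) :
    |∫ x, χ x * deriv2Along ψ (axisDir (k + 1) x) (Bpt δ (k + 1) x) ∂P| ≤ K * √(2 * δ) := by
  have hs0 : 0 ≤ √(2 * δ) := Real.sqrt_nonneg _
  set G₁ : ℝ → ℝ := fun x => χ x * deriv2Along ψ (1, 0) (Bpt δ k x + (-√(2 * δ)) • axisDir k x)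
  set G₂ : ℝ → ℝ := fun x => χ x * deriv2Along ψ (0, 1) (Bpt δ k x + √(2 * δ) • axisDir k x)
  have hG₁ : DyadicMeasurable (k + 1) G₁ := fun x y h => by
    simp only [G₁, hχ x y h, dyadicMeasurable_Bpt δ k x y h, dyadicMeasurable_axisDir k x y h]
  have hG₂ : DyadicMeasurable (k + 1) G₂ := fun x y h => by
    simp only [G₂, hχ x y h, dyadicMeasurable_Bpt δ k x y h, dyadicMeasurable_axisDir k x y h]
  have hsplit : ∀ x, χ x * deriv2Along ψ (axisDir (k + 1) x) (Bpt δ (k + 1) x)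
      = if rad (k + 1) x = -1 then G₁ x else G₂ x := fun x => by
    have hdir : axisDir (k + 1) x = if rad (k + 1) x = -1 then (1, 0) else (0, 1) := rfl
    rw [Bpt_succ, hdir]
    rcases rad_eq_one_or_neg_one (k + 1) x with h | h <;> rw [h] <;> norm_num [G₁, G₂]
  have hpair : ∀ x, |G₁ x + G₂ x| ≤ 2 * (K * √(2 * δ)) := fun x => by
    rw [← mul_add]
    exact abs_mul_le_of_abs_le_one (hχ1 x) (by positivity) fun hx =>
      abs_deriv2Along_add_deriv2Along_le hharm hK hs0
        (add_smul_axisDir_mem_openDisc (hin x hx) (by rw [abs_neg, abs_of_nonneg hs0]) k x)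
        (add_smul_axisDir_mem_openDisc (hin x hx) (abs_of_nonneg hs0).le k x)
  rw [integral_congr_ae (ae_of_all _ hsplit), integral_ite_rad hG₁ hG₂,
    ← integral_add hG₁.integrable hG₂.integrable, abs_div, abs_two,
    div_le_iff₀ two_pos, mul_comm]
  exact abs_integral_le_of_forall_abs_le hpair

end Step

/-! ### Summing over the steps before the stopping index -/

section Estimate

variable {ψ : ℝ × ℝ → ℝ} {δ ε M : ℝ} {K : ℝ≥0} {N : ℕ}

lemma abs_integral_stopWeight_mul_increment_le (hψ : ContDiffOn ℝ (⊤ : ℕ∞) ψ openDisc)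
    (hM : ∀ e ∈ axes, ∀ y ∈ openDisc, |deriv2Along ψ e y| ≤ M)
    (hK : ∀ e ∈ axes, LipschitzOnWith K (deriv2Along ψ e) openDisc)
    (hharm : ∀ y ∈ openDisc, deriv2Along ψ (1, 0) y + deriv2Along ψ (0, 1) y = 0)
    (hδ : 0 ≤ δ) (hε : ε ≤ 1) (hNs : N * √(2 * δ) < ε) {n j : ℕ} (hn : n < N ^ 4)
    (hj : j < N) :
    |∫ x, stopWeight δ ε N n x * (ψ (Bpt δ (n * N + j + 1) x) - ψ (Bpt δ (n * N + j) x)) ∂P|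
      ≤ K * √(2 * δ) ^ 3 + δ * (K * √(2 * δ)) + if j = 0 then δ * M else 0 := by
  set I := ∫ x, stopWeight δ ε N n x
    * (ψ (Bpt δ (n * N + j + 1) x) - ψ (Bpt δ (n * N + j) x)) ∂P
  set J := ∫ x, stopWeight δ ε N n x
    * deriv2Along ψ (axisDir (n * N + j) x) (Bpt δ (n * N + j) x) ∂P
  have hin : ∀ i < N, ∀ x, stopWeight δ ε N n x ≠ 0 → Bnorm δ (n * N + i) x + √(2 * δ) < 1 :=
    fun i hi x hx => Bnorm_add_sqrt_lt_one hε hNs (lt_nstop_of_stopWeight_ne_zero hx) hi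
  have hw (i : ℕ) : DyadicMeasurable (n * N + i + 1) (stopWeight δ ε N n) :=
    (dyadicMeasurable_stopWeight δ ε hn).mono (by omega)
  have hIJ : |I - δ * J| ≤ K * √(2 * δ) ^ 3 :=
    abs_integral_mul_increment_sub_le hψ hK hδ (hw j) (abs_stopWeight_le δ ε N n) (hin j hj)
  have hJ : δ * |J| ≤ δ * (K * √(2 * δ)) + if j = 0 then δ * M else 0 := by
    rcases j with _ | j
    · have := abs_integral_mul_deriv2Along_le hM (abs_stopWeight_le δ ε N n)
        fun x hx => (le_add_of_nonneg_right (Real.sqrt_nonneg _)).trans_lt (hin 0 hj x hx)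
      rw [if_pos rfl]
      linarith [mul_le_mul_of_nonneg_left this hδ,
        mul_nonneg hδ (mul_nonneg K.coe_nonneg (Real.sqrt_nonneg (2 * δ)))]
    · have := abs_integral_mul_deriv2Along_succ_le hharm (hK _ (by simp [axes])) (hw j)
        (abs_stopWeight_le δ ε N n) (hin j (by omega))
      rw [if_neg (by omega), add_zero]
      exact mul_le_mul_of_nonneg_left this hδ
  linarith [abs_sub_abs_le_abs_sub I (δ * J),
    show |δ * J| = δ * |J| by rw [abs_mul, abs_of_nonneg hδ]]

lemma abs_integral_stopped_sub_le (hψ : ContDiffOn ℝ (⊤ : ℕ∞) ψ openDisc)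
    (hM : ∀ e ∈ axes, ∀ y ∈ openDisc, |deriv2Along ψ e y| ≤ M)
    (hK : ∀ e ∈ axes, LipschitzOnWith K (deriv2Along ψ e) openDisc)
    (hharm : ∀ y ∈ openDisc, deriv2Along ψ (1, 0) y + deriv2Along ψ (0, 1) y = 0)
    (hδ : 0 ≤ δ) (hε : ε ≤ 1) (hN : 0 < N) (hNs : N * √(2 * δ) < ε) :
    |∫ x, ψ (Bpt δ (nstop δ ε N x * N) x) ∂P - ψ (0, 0)|
      ≤ N ^ 4 * (N * (K * √(2 * δ) ^ 3 + δ * (K * √(2 * δ))) + δ * M) := by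
  set Δ : ℕ → ℕ → ℝ → ℝ := fun n j x =>
    stopWeight δ ε N n x * (ψ (Bpt δ (n * N + j + 1) x) - ψ (Bpt δ (n * N + j) x))
  have hint : ∀ n ∈ Finset.range (N ^ 4), ∀ j ∈ Finset.range N, Integrable (Δ n j) P :=
    fun n hn j _ => (dyadicMeasurable_mul_increment ψ δ
      ((dyadicMeasurable_stopWeight δ ε (Finset.mem_range.1 hn)).mono (by omega))).integrable
  have htel : ∀ x, ψ (Bpt δ (nstop δ ε N x * N) x)
      = ψ (0, 0) + ∑ n ∈ Finset.range (N ^ 4), ∑ j ∈ Finset.range N, Δ n j x := fun x => by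
    rw [sum_stopWeight_mul_sub (fun k => ψ (Bpt δ k x)), Bpt_zero, Prod.zero_eq_mk]
    ring
  rw [integral_congr_ae (ae_of_all _ htel), integral_add (integrable_const _)
      (integrable_finsetSum _ fun n hn => integrable_finsetSum _ (hint n hn)),
    integral_finsetSum _ fun n hn => integrable_finsetSum _ (hint n hn), integral_const,
    probReal_univ, one_smul, add_sub_cancel_left]
  calc _ ≤ ∑ n ∈ Finset.range (N ^ 4), ∑ j ∈ Finset.range N, |∫ x, Δ n j x ∂P| := by
        refine (Finset.abs_sum_le_sum_abs _ _).trans (Finset.sum_le_sum fun n hn => ?_)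
        rw [integral_finsetSum _ (hint n hn)]
        exact Finset.abs_sum_le_sum_abs _ _
    _ ≤ ∑ n ∈ Finset.range (N ^ 4), ∑ j ∈ Finset.range N,
        (K * √(2 * δ) ^ 3 + δ * (K * √(2 * δ)) + if j = 0 then δ * M else 0) :=
      Finset.sum_le_sum fun n hn => Finset.sum_le_sum fun j hj =>
        abs_integral_stopWeight_mul_increment_le hψ hM hK hharm hδ hε hNs
          (Finset.mem_range.1 hn) (Finset.mem_range.1 hj)
    _ = _ := by
      simp [Finset.sum_add_distrib, Finset.sum_ite_eq', hN]
      ring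

end Estimate

lemma sqrt_two_mul_div_pow_five_lt {T : ℝ} (hT : 0 < T) {N : ℕ} (hN : 2 * T < N) :
    √(2 * (T / N ^ 5)) < 1 / N ^ 2 := by
  have hN0 : (0 : ℝ) < N := by linarith
  rw [Real.sqrt_lt' (by positivity), div_pow, one_pow, ← pow_mul, mul_div_assoc',
    div_lt_div_iff₀ (by positivity) (by positivity)]
  calc 2 * T * (N : ℝ) ^ (2 * 2) < (N : ℝ) * (N : ℝ) ^ (2 * 2) := by gcongr
    _ = 1 * (N : ℝ) ^ 5 := by ring

lemma stopped_bound_le_div {T : ℝ} (hT : 0 < T) {N : ℕ} (hN : 2 * T < N) {M : ℝ} {K : ℝ≥0} :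
    (N : ℝ) ^ 4 * (N * (K * √(2 * (T / N ^ 5)) ^ 3 + T / N ^ 5 * (K * √(2 * (T / N ^ 5))))
      + T / N ^ 5 * M) ≤ (K + T * K + T * M) / N := by
  have hN0 : (0 : ℝ) < N := by linarith
  have hN1 : (1 : ℝ) ≤ N := Nat.one_le_cast.2 (Nat.cast_pos.1 hN0)
  set s := √(2 * (T / N ^ 5))
  have hs : s ≤ 1 / N ^ 2 := (sqrt_two_mul_div_pow_five_lt hT hN).le
  have hK := K.coe_nonneg
  calc _ = N ^ 5 * K * s ^ 3 + T * K * s + T * M / N := by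
        field_simp
    _ ≤ N ^ 5 * K * (1 / N ^ 2) ^ 3 + T * K * (1 / N ^ 2) + T * M / N := by
        gcongr
    _ = K / N + T * K / N / N + T * M / N := by
        field_simp
    _ ≤ (K + T * K + T * M) / N := by
        rw [add_div, add_div]
        gcongr
        exact div_le_self (by positivity) hN1

end DyadicWalk

/-- weak convergence of the stopped coarse walk: for harmonic `ψ`,
`lim_{T→∞} limsup_{N→∞} |E ψ(X_{n_ε}) - ψ(0,0)| = 0`. -/
theorem statement16 (ψ : ℝ × ℝ → ℝ) (U : Set (ℝ × ℝ))
    (hU : IsOpen U) (hUD : closedDisc ⊆ U) (hψ : ContDiffOn ℝ (⊤ : ℕ∞) ψ U)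
    (hharm : ∀ y ∈ openDisc, pd1 (pd1 ψ) y + pd2 (pd2 ψ) y = 0) :
    Tendsto (fun T : ℝ =>
      limsup (fun N : ℕ =>
        |(∫ x, ψ (Bpt (T / (N : ℝ) ^ 5)
              (nstop (T / (N : ℝ) ^ 5) (1 / (N : ℝ)) N x * N) x) ∂P) -
          ψ (0, 0)|) atTop)
      atTop (nhds 0) := by
  open DyadicWalk in
  obtain ⟨M, K, hM, hK⟩ := exists_bound_lipschitzOnWith_deriv2Along hU hUD hψ
  have hψ' := hψ.mono (openDisc_subset_closedDisc.trans hUD)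
  refine tendsto_const_nhds.congr' ((eventually_gt_atTop 0).mono fun T hT =>
    (Tendsto.limsup_eq (squeeze_zero' (Eventually.of_forall fun N => abs_nonneg _) ?_
      (tendsto_const_div_atTop_nhds_zero_nat (K + T * K + T * M)))).symm)
  filter_upwards [eventually_gt_atTop ⌈2 * T⌉₊] with N hN
  have hNT : 2 * T < N := Nat.lt_of_ceil_lt hN
  have hN1 : (1 : ℝ) ≤ N := Nat.one_le_cast.2 (by omega)
  have hNs : (N : ℝ) * √(2 * (T / N ^ 5)) < 1 / N := calc
    _ < (N : ℝ) * (1 / N ^ 2) :=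
      mul_lt_mul_of_pos_left (sqrt_two_mul_div_pow_five_lt hT hNT) (by positivity)
    _ = 1 / N := by field_simp
  exact (abs_integral_stopped_sub_le hψ' hM hK hharm (by positivity)
    (div_le_one_of_le₀ hN1 (by positivity)) (by omega) hNs).trans (stopped_bound_le_div hT hNT)

end
end
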